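/- arXiv:1208.5083 — 5 statements merged into one kernel-verified Lean document; each statement's English description precedes it below -/
import Mathlib

section
/- Consider the linear program: maximize r^T x subject to, for each state s, Σ_{a : s(a)=s} x_a = 1 + γ Σ_{a : t(a)=s} x_a, and x ≥ 0. This LP is non-degenerate, and the map π ↦ x^π is a bijection between the policies of the MDP and the vertices (basic feasible solutions) of the LP; moreover x^π_a ≥ 1 for every action a in π. -/
/-!
On a policy `π` the flux equations read `y = 1 + γ P y`, where `P` pushes mass along the
functional graph of `π`. As `P` preserves total mass, comparing `ℓ¹` norms shows that
`u ≤ γ P u` forces `u = 0` for `u ≥ 0`; applied to `|d|` this makes `id - γ P` injective,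
hence bijective, and applied to the negative part of a solution it gives `y ≥ 1`.

If `x^π` lies in the open segment between two feasible points, both vanish off `π`, so they
are fluxes of `π` and equal `x^π`: flux vectors are vertices. Conversely, at a vertex no
kernel direction of the constraint map is supported inside the support (one could move both
ways along it), so at most `|S|` actions carry flux; every state carries outflow `≥ 1`, so
the support picks exactly one action per state, i.e. it is a policy.
-/

open Finset

/-- A deterministic Markov decision process: each action `a` is usable in the
single state `src a`, gives reward `r a`, and moves deterministically to `tgt a`.
Every state has at least one usable action. -/
structure DetMDP (S A : Type) where
  src : A → S
  tgt : A → S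
  r : A → ℝ
  exists_action : ∀ s : S, ∃ a : A, src a = s

namespace DetMDP

variable {S A : Type} [Fintype S] [Fintype A] [DecidableEq S] [DecidableEq A]
variable (M : DetMDP S A)

/-- `π : S → A` is a policy if it assigns to each state an action usable there. -/
def IsPolicy (π : S → A) : Prop := ∀ s : S, M.src (π s) = s

/-- The next-state map of a policy. -/
def step (π : S → A) (s : S) : S := M.tgt (π s)

/-- `v` is the value vector of policy `π` with uniform discount `γ`:
the unique solution of `v = r_π + γ (P^π)ᵀ v`, stated pointwise. -/
def IsValue (γ : ℝ) (π : S → A) (v : S → ℝ) : Prop :=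
  ∀ s : S, v s = M.r (π s) + γ * v (M.tgt (π s))

/-- The gain (reduced cost) of action `a` with respect to a value vector `v`. -/
def gain (γ : ℝ) (v : S → ℝ) (a : A) : ℝ :=
  M.r a + γ * v (M.tgt a) - v (M.src a)

/-- `x` is the flux vector of policy `π`: it vanishes off the policy, and on the
policy it satisfies the flux (flow conservation) equations of the primal LP. -/
def IsFlux (γ : ℝ) (π : S → A) (x : A → ℝ) : Prop :=
  (∀ a : A, a ≠ π (M.src a) → x a = 0) ∧
  ∀ s : S, (∑ a ∈ univ.filter fun a => M.src a = s, x a)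
      = 1 + γ * ∑ a ∈ univ.filter fun a => M.tgt a = s, x a

/-- Action `a` is a cycle action of policy `π`: it is in `π` and its source state
lies on a cycle of the functional graph of `π` (periods are at most `|S|`). -/
def OnCycle (π : S → A) (a : A) : Prop :=
  a = π (M.src a) ∧
    ∃ k ∈ Finset.Icc 1 (Fintype.card S), (M.step π)^[k] (M.src a) = M.src a

/-- `C` is (the action set of) a cycle of the policy `π`. -/
def IsCycleOf (π : S → A) (C : Finset A) : Prop :=
  ∃ s : S, (∃ k ∈ Finset.Icc 1 (Fintype.card S), (M.step π)^[k] s = s) ∧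
    C = (Finset.range (Fintype.card S)).image fun i => π ((M.step π)^[i] s)

/-- One pivot of the simplex method with the highest-gain rule: switch to the
action of (strictly positive) maximal gain. -/
def SimplexPivot (γ : ℝ) (π π' : S → A) : Prop :=
  ∃ (v : S → ℝ) (a : A), M.IsValue γ π v ∧ 0 < M.gain γ v a ∧
    (∀ b : A, M.gain γ v b ≤ M.gain γ v a) ∧ π' = Function.update π (M.src a) a

/-- A policy is terminal if all gains are nonpositive. -/
def IsTerminal (γ : ℝ) (π : S → A) : Prop :=
  ∃ v : S → ℝ, M.IsValue γ π v ∧ ∀ a : A, M.gain γ v a ≤ 0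

/-- An execution of the simplex method with the highest-gain pivoting rule:
at every time step either a pivot occurs, or the current policy is terminal
(and the sequence stays constant). -/
def IsExecution (γ : ℝ) (seq : ℕ → S → A) : Prop :=
  (∀ t : ℕ, M.IsPolicy (seq t)) ∧
  ∀ t : ℕ, M.SimplexPivot γ (seq t) (seq (t + 1)) ∨
    (M.IsTerminal γ (seq t) ∧ seq (t + 1) = seq t)

/-- Iteration `t` of the execution creates a new cycle. -/
def NewCycleAt (seq : ℕ → S → A) (t : ℕ) : Prop :=
  ∃ C : Finset A, M.IsCycleOf (seq (t + 1)) C ∧ ¬ M.IsCycleOf (seq t) C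

/-- The feasible region of the primal flux LP. -/
def feasible (γ : ℝ) : Set (A → ℝ) :=
  {x | (∀ a : A, 0 ≤ x a) ∧
    ∀ s : S, (∑ a ∈ univ.filter fun a => M.src a = s, x a)
        = 1 + γ * ∑ a ∈ univ.filter fun a => M.tgt a = s, x a}

end DetMDP
open Filter Topology

section ExtremePoints

variable {ι V : Type*} [Fintype ι] [AddCommGroup V] [Module ℝ V] {L : (ι → ℝ) →ₗ[ℝ] V} {c : V}
  {x : ι → ℝ}

theorem eq_zero_of_mem_extremePoints_of_map_eq_zero {d : ι → ℝ}
    (hx : x ∈ Set.extremePoints ℝ {x | 0 ≤ x ∧ L x = c}) (hd : L d = 0)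
    (hsupp : ∀ i, x i = 0 → d i = 0) : d = 0 := by
  have hsmall : ∀ i, ∀ᶠ ε in 𝓝 (0 : ℝ), 0 ≤ x i + ε * d i ∧ 0 ≤ x i - ε * d i := by
    intro i
    rcases (show 0 ≤ x i from hx.1.1 i).eq_or_lt with hxi | hxi
    · simp [← hxi, hsupp i hxi.symm]
    · have hcont (σ : ℝ) : Tendsto (fun ε => x i + σ * ε * d i) (𝓝 0) (𝓝 (x i)) :=
        Continuous.tendsto' (by fun_prop) _ _ (by simp)
      filter_upwards [(hcont 1).eventually_const_lt hxi, (hcont (-1)).eventually_const_lt hxi]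
        with ε h₁ h₂
      constructor <;> linarith
  obtain ⟨ε, hε, hε0⟩ :=
    ((eventually_all.2 hsmall).filter_mono nhdsWithin_le_nhds |>.and self_mem_nhdsWithin).exists
      (f := 𝓝[≠] (0 : ℝ))
  have hmem (σ : ℝ) (hσ : ∀ i, 0 ≤ x i + σ * d i) : x + σ • d ∈ {x | 0 ≤ x ∧ L x = c} :=
    ⟨hσ, by simp [hx.1.2, hd]⟩
  have hxd : x + ε • d = x :=
    hx.2 (hmem ε fun i => (hε i).1) (x₂ := x - ε • d)
      (by simpa [sub_eq_add_neg] using hmem (-ε) fun i => by simpa [sub_eq_add_neg] using (hε i).2)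
      (mem_openSegment_add_sub x (ε • d))
  exact (smul_eq_zero.1 (by simpa using hxd)).resolve_left hε0

theorem card_support_le_finrank_of_mem_extremePoints [DecidableEq ι] [FiniteDimensional ℝ V]
    (hx : x ∈ Set.extremePoints ℝ {x | 0 ≤ x ∧ L x = c}) :
    #{i | x i ≠ 0} ≤ Module.finrank ℝ V := by
  let extend := Function.ExtendByZero.linearMap ℝ (Subtype.val : {i // x i ≠ 0} → ι)
  have hinj : Function.Injective (L ∘ₗ extend) := by
    refine (injective_iff_map_eq_zero _).2 fun g hg => ?_
    have hzero : extend g = 0 := eq_zero_of_mem_extremePoints_of_map_eq_zero hx hg fun i hi =>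
      Function.extend_apply' _ _ _ fun ⟨j, hj⟩ => j.2 (hj ▸ hi)
    ext j
    simpa [extend, Subtype.val_injective.extend_apply] using congrFun hzero j
  simpa [Fintype.card_subtype] using LinearMap.finrank_le_finrank_of_injective hinj

end ExtremePoints

section Pushforward

variable {ι κ : Type*} [Fintype ι] [DecidableEq κ]

def pushforward (f : ι → κ) : (ι → ℝ) →ₗ[ℝ] (κ → ℝ) where
  toFun y k := ∑ i with f i = k, y i
  map_add' y z := by ext k; simp [sum_add_distrib]
  map_smul' c y := by ext k; simp [mul_sum]

variable {f : ι → κ} {y z : ι → ℝ}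

theorem pushforward_apply (k : κ) : pushforward f y k = ∑ i with f i = k, y i := rfl

theorem sum_pushforward [Fintype κ] : ∑ k, pushforward f y k = ∑ i, y i :=
  sum_fiberwise univ f y

theorem pushforward_mono (h : y ≤ z) : pushforward f y ≤ pushforward f z :=
  fun _ => sum_le_sum fun i _ => h i

theorem pushforward_nonneg (h : 0 ≤ y) : 0 ≤ pushforward f y := by
  simpa using pushforward_mono (f := f) h

theorem abs_pushforward_le : |pushforward f y| ≤ pushforward f |y| :=
  fun _ => abs_sum_le_sum_abs _ _

theorem pushforward_id [DecidableEq ι] : pushforward id y = y := by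
  ext k; simp [pushforward_apply, filter_eq']

theorem pushforward_eq_pushforward_comp {η : Type*} [Fintype η] {e : η → ι}
    (he : Function.Injective e) (hy : ∀ i ∉ Set.range e, y i = 0) :
    pushforward f y = pushforward (f ∘ e) (y ∘ e) := by
  ext k
  simp only [pushforward_apply, sum_filter]
  exact (Fintype.sum_of_injective e he _ _ (fun i hi => by simp [hy i hi]) fun j => rfl).symm

end Pushforward

section Discounted

variable {ι : Type*} [Fintype ι] [DecidableEq ι] {f : ι → ι} {γ : ℝ}

theorem eq_zero_of_le_smul_pushforward (hγ1 : γ < 1) {u : ι → ℝ} (hu : 0 ≤ u)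
    (h : u ≤ γ • pushforward f u) : u = 0 := by
  have hsum : ∑ i, u i ≤ γ * ∑ i, u i := by
    calc ∑ i, u i ≤ ∑ i, γ * pushforward f u i := sum_le_sum fun i _ => h i
      _ = γ * ∑ i, u i := by rw [← mul_sum, sum_pushforward]
  have hzero : ∑ i, u i = 0 := by nlinarith [sum_nonneg fun i (_ : i ∈ univ) => hu i]
  ext i
  exact (sum_eq_zero_iff_of_nonneg fun i _ => hu i).1 hzero i (mem_univ i)

theorem injective_id_sub_smul_pushforward (hγ0 : 0 ≤ γ) (hγ1 : γ < 1) :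
    Function.Injective (LinearMap.id - γ • pushforward f : (ι → ℝ) →ₗ[ℝ] ι → ℝ) := by
  refine (injective_iff_map_eq_zero _).2 fun d hd => ?_
  have hfix : d = γ • pushforward f d := sub_eq_zero.1 hd
  have habs : |d| ≤ γ • pushforward f |d| := fun i => by
    calc |d i| = γ * |pushforward f d i| := by
          rw [congrFun hfix i, Pi.smul_apply, smul_eq_mul, abs_mul, abs_of_nonneg hγ0]
      _ ≤ γ * pushforward f |d| i := mul_le_mul_of_nonneg_left (abs_pushforward_le i) hγ0
  have := eq_zero_of_le_smul_pushforward hγ1 (fun i => abs_nonneg (d i)) habs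
  exact funext fun i => abs_eq_zero.1 (congrFun this i)

theorem existsUnique_eq_one_add_smul_pushforward (hγ0 : 0 ≤ γ) (hγ1 : γ < 1) :
    ∃! y : ι → ℝ, y = 1 + γ • pushforward f y := by
  have hinj := injective_id_sub_smul_pushforward (f := f) hγ0 hγ1
  obtain ⟨y, hy⟩ := LinearMap.injective_iff_surjective.1 hinj 1
  have hsolve (y : ι → ℝ) :
      (LinearMap.id - γ • pushforward f : (ι → ℝ) →ₗ[ℝ] ι → ℝ) y = 1 ↔
        y = 1 + γ • pushforward f y := by
    simp only [LinearMap.sub_apply, LinearMap.id_apply, LinearMap.smul_apply]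
    exact sub_eq_iff_eq_add
  exact ⟨y, (hsolve y).1 hy, fun y' hy' => hinj (((hsolve y').2 hy').trans hy.symm)⟩

theorem one_le_of_eq_one_add_smul_pushforward (hγ0 : 0 ≤ γ) (hγ1 : γ < 1) {y : ι → ℝ}
    (hy : y = 1 + γ • pushforward f y) : 1 ≤ y := by
  have hneg : y⁻ ≤ γ • pushforward f y⁻ := fun i => by
    rcases le_or_gt 0 (y i) with hi | hi
    · rw [Pi.negPart_apply, negPart_eq_zero.2 hi]
      exact mul_nonneg hγ0 (pushforward_nonneg (negPart_nonneg y) i)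
    · have hmono := mul_le_mul_of_nonneg_left (pushforward_mono (f := f) (neg_le_negPart y) i) hγ0
      calc y⁻ i = -y i := by rw [Pi.negPart_apply, negPart_eq_neg.2 hi.le]
        _ = -1 + γ * pushforward f (-y) i := by rw [congrFun hy i]; simp; ring
        _ ≤ γ * pushforward f y⁻ i := by linarith
  have hnonneg : 0 ≤ y :=
    negPart_eq_zero.1 (eq_zero_of_le_smul_pushforward hγ1 (negPart_nonneg y) hneg)
  rw [hy]
  exact le_add_of_nonneg_right (smul_nonneg hγ0 (pushforward_nonneg hnonneg))

end Discounted

namespace DetMDP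

variable {S A : Type} {M : DetMDP S A} {γ : ℝ} {π : S → A} {x x' : A → ℝ}

theorem IsPolicy.injective (hπ : M.IsPolicy π) : Function.Injective π :=
  fun s s' h => by rw [← hπ s, ← hπ s', h]

theorem IsPolicy.eq_of_mem_range (hπ : M.IsPolicy π) {a : A} (ha : a ∈ Set.range π) :
    a = π (M.src a) := by
  obtain ⟨s, rfl⟩ := ha
  rw [hπ s]

variable [Fintype A] [DecidableEq S]

theorem flow_equations_iff :
    (∀ s : S, (∑ a ∈ univ.filter fun a => M.src a = s, x a)
      = 1 + γ * ∑ a ∈ univ.filter fun a => M.tgt a = s, x a) ↔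
    pushforward M.src x = 1 + γ • pushforward M.tgt x := by
  simp [funext_iff, pushforward_apply]

theorem feasible_eq :
    M.feasible γ = {x | 0 ≤ x ∧ (pushforward M.src - γ • pushforward M.tgt) x = 1} := by
  ext x
  simp only [feasible, Set.mem_ofPred_eq, flow_equations_iff, LinearMap.sub_apply,
    LinearMap.smul_apply, sub_eq_iff_eq_add, Pi.le_def, Pi.zero_apply]

variable [Fintype S]

namespace IsPolicy

theorem pushforward_src (hπ : M.IsPolicy π) (hx : ∀ a, a ≠ π (M.src a) → x a = 0) :
    pushforward M.src x = x ∘ π := by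
  rw [pushforward_eq_pushforward_comp hπ.injective fun a ha => hx a fun h => ha ⟨M.src a, h.symm⟩]
  rw [show M.src ∘ π = id from funext hπ, pushforward_id]

theorem pushforward_tgt (hπ : M.IsPolicy π) (hx : ∀ a, a ≠ π (M.src a) → x a = 0) :
    pushforward M.tgt x = pushforward (M.step π) (x ∘ π) :=
  pushforward_eq_pushforward_comp hπ.injective fun a ha => hx a fun h => ha ⟨M.src a, h.symm⟩

theorem isFlux_iff (hπ : M.IsPolicy π) :
    M.IsFlux γ π x ↔ (∀ a, a ≠ π (M.src a) → x a = 0) ∧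
      x ∘ π = 1 + γ • pushforward (M.step π) (x ∘ π) :=
  and_congr_right fun hx => by rw [flow_equations_iff, hπ.pushforward_src hx, hπ.pushforward_tgt hx]

theorem exists_isFlux (hπ : M.IsPolicy π) (hγ0 : 0 ≤ γ) (hγ1 : γ < 1) :
    ∃ x, M.IsFlux γ π x := by
  obtain ⟨y, hy, -⟩ := existsUnique_eq_one_add_smul_pushforward (f := M.step π) hγ0 hγ1
  have hcomp : Function.extend π y 0 ∘ π = y := funext (hπ.injective.extend_apply y 0)
  refine ⟨Function.extend π y 0, hπ.isFlux_iff.2 ⟨fun a ha => ?_, by rw [hcomp]; exact hy⟩⟩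
  exact Function.extend_apply' _ _ _ fun hmem => ha (hπ.eq_of_mem_range hmem)

end IsPolicy

namespace IsFlux

theorem one_le (hx : M.IsFlux γ π x) (hπ : M.IsPolicy π) (hγ0 : 0 ≤ γ) (hγ1 : γ < 1) {a : A}
    (ha : a = π (M.src a)) : 1 ≤ x a := by
  rw [ha]
  exact one_le_of_eq_one_add_smul_pushforward hγ0 hγ1 (hπ.isFlux_iff.1 hx).2 _

theorem eq (hx : M.IsFlux γ π x) (hx' : M.IsFlux γ π x') (hπ : M.IsPolicy π) (hγ0 : 0 ≤ γ)
    (hγ1 : γ < 1) : x = x' := by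
  have hcomp : x ∘ π = x' ∘ π := (existsUnique_eq_one_add_smul_pushforward hγ0 hγ1).unique
    (hπ.isFlux_iff.1 hx).2 (hπ.isFlux_iff.1 hx').2
  ext a
  by_cases ha : a = π (M.src a)
  · rw [ha]
    exact congrFun hcomp (M.src a)
  · rw [hx.1 a ha, hx'.1 a ha]

theorem mem_feasible (hx : M.IsFlux γ π x) (hπ : M.IsPolicy π) (hγ0 : 0 ≤ γ) (hγ1 : γ < 1) :
    x ∈ M.feasible γ := by
  refine ⟨fun a => ?_, hx.2⟩
  by_cases ha : a = π (M.src a)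
  · exact zero_le_one.trans (hx.one_le hπ hγ0 hγ1 ha)
  · exact (hx.1 a ha).ge

theorem mem_extremePoints (hx : M.IsFlux γ π x) (hπ : M.IsPolicy π) (hγ0 : 0 ≤ γ)
    (hγ1 : γ < 1) : x ∈ Set.extremePoints ℝ (M.feasible γ) := by
  refine ⟨hx.mem_feasible hπ hγ0 hγ1, fun x₁ hx₁ x₂ hx₂ ⟨t, u, ht, hu, _, hseg⟩ => ?_⟩
  have hvanish (a : A) (ha : a ≠ π (M.src a)) : x₁ a = 0 := by
    have := congrFun hseg a
    simp only [Pi.add_apply, Pi.smul_apply, smul_eq_mul, hx.1 a ha] at this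
    nlinarith [hx₁.1 a, hx₂.1 a]
  exact IsFlux.eq ⟨hvanish, hx₁.2⟩ hx hπ hγ0 hγ1

theorem policy_eq {π' : S → A} (hx : M.IsFlux γ π x) (hx' : M.IsFlux γ π' x)
    (hπ : M.IsPolicy π) (hγ0 : 0 ≤ γ) (hγ1 : γ < 1) : π = π' := by
  funext s
  by_contra hne
  have hone := hx.one_le hπ hγ0 hγ1 (a := π s) (by rw [hπ s])
  rw [hx'.1 (π s) (by rwa [hπ s])] at hone
  exact zero_lt_one.not_ge hone

end IsFlux

theorem exists_isPolicy_isFlux_of_mem_extremePoints (hγ0 : 0 ≤ γ)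
    (hx : x ∈ Set.extremePoints ℝ (M.feasible γ)) :
    ∃ π, M.IsPolicy π ∧ M.IsFlux γ π x ∧ #{a | x a ≠ 0} = Fintype.card S := by
  classical
  have hflow := hx.1.2
  have hcard : #{a | x a ≠ 0} ≤ Fintype.card S := by
    rw [feasible_eq] at hx
    simpa using card_support_le_finrank_of_mem_extremePoints hx
  have hstate (s : S) : ∃ a, M.src a = s ∧ x a ≠ 0 := by
    have hout : ∑ a with M.src a = s, x a ≠ 0 := by
      rw [hflow s]
      have : 0 ≤ ∑ a with M.tgt a = s, x a := sum_nonneg fun a _ => hx.1.1 a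
      positivity
    obtain ⟨a, ha, hxa⟩ := exists_ne_zero_of_sum_ne_zero hout
    exact ⟨a, (mem_filter.1 ha).2, hxa⟩
  choose π hπ hsupp using hstate
  replace hπ : M.IsPolicy π := hπ
  have hcard_image : #(univ.image π) = Fintype.card S := by
    rw [card_image_of_injective _ hπ.injective, card_univ]
  have himage : univ.image π = ({a | x a ≠ 0} : Finset A) :=
    eq_of_subset_of_card_le (fun a ha => by
      obtain ⟨s, -, rfl⟩ := mem_image.1 ha
      exact mem_filter.2 ⟨mem_univ _, hsupp s⟩) (hcard_image ▸ hcard)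
  have hvanish (a : A) (ha : a ≠ π (M.src a)) : x a = 0 := by
    by_contra hxa
    obtain ⟨s, -, rfl⟩ := mem_image.1 (himage ▸ mem_filter.2 ⟨mem_univ a, hxa⟩)
    exact ha (by rw [hπ s])
  exact ⟨π, hπ, ⟨hvanish, hflow⟩, himage ▸ hcard_image⟩

end DetMDP

theorem simplex_mdp_lp_vertices_policies_general
    {S A : Type} [Fintype S] [Fintype A] [DecidableEq S]
    (M : DetMDP S A) (γ : ℝ) (hγ0 : 0 ≤ γ) (hγ1 : γ < 1) :
    -- every policy has a unique flux vector
    (∀ π : S → A, M.IsPolicy π → ∃! x : A → ℝ, M.IsFlux γ π x) ∧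
    -- the flux vector of a policy is a vertex of the LP, with basic variables ≥ 1
    (∀ (π : S → A) (x : A → ℝ), M.IsPolicy π → M.IsFlux γ π x →
      x ∈ Set.extremePoints ℝ (M.feasible γ) ∧
      ∀ a : A, a = π (M.src a) → 1 ≤ x a) ∧
    -- distinct policies have distinct flux vectors (injectivity)
    (∀ (π π' : S → A) (x : A → ℝ), M.IsPolicy π → M.IsPolicy π' →
      M.IsFlux γ π x → M.IsFlux γ π' x → π = π') ∧
    -- every vertex of the LP is the flux vector of some policy (surjectivity)
    (∀ x ∈ Set.extremePoints ℝ (M.feasible γ),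
      ∃ π : S → A, M.IsPolicy π ∧ M.IsFlux γ π x) ∧
    -- non-degeneracy: every vertex has exactly `|S|` nonzero variables
    (∀ x ∈ Set.extremePoints ℝ (M.feasible γ),
      (Finset.univ.filter fun a : A => x a ≠ 0).card = Fintype.card S) := by
  refine ⟨fun π hπ => ?_, fun π x hπ hx => ?_, fun π π' x hπ _ hx hx' => ?_, fun x hx => ?_,
    fun x hx => ?_⟩
  · obtain ⟨x, hx⟩ := hπ.exists_isFlux hγ0 hγ1
    exact ⟨x, hx, fun x' hx' => hx'.eq hx hπ hγ0 hγ1⟩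
  · exact ⟨hx.mem_extremePoints hπ hγ0 hγ1, fun _ => hx.one_le hπ hγ0 hγ1⟩
  · exact hx.policy_eq hx' hπ hγ0 hγ1
  · obtain ⟨π, hπ, hx, -⟩ := DetMDP.exists_isPolicy_isFlux_of_mem_extremePoints hγ0 hx
    exact ⟨π, hπ, hx⟩
  · obtain ⟨-, -, -, hcard⟩ := DetMDP.exists_isPolicy_isFlux_of_mem_extremePoints hγ0 hx
    exact hcard

/-- The primal flux LP is non-degenerate, and `π ↦ x^π` is a
bijection between policies and vertices (extreme points) of the feasible region;
moreover `x^π_a ≥ 1` for every action `a` in `π`. -/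
theorem simplex_mdp_lp_vertices_policies
    {S A : Type} [Fintype S] [Fintype A] [DecidableEq S] [DecidableEq A]
    (M : DetMDP S A) (γ : ℝ) (hγ0 : 0 ≤ γ) (hγ1 : γ < 1) :
    -- every policy has a unique flux vector
    (∀ π : S → A, M.IsPolicy π → ∃! x : A → ℝ, M.IsFlux γ π x) ∧
    -- the flux vector of a policy is a vertex of the LP, with basic variables ≥ 1
    (∀ (π : S → A) (x : A → ℝ), M.IsPolicy π → M.IsFlux γ π x →
      x ∈ Set.extremePoints ℝ (M.feasible γ) ∧
      ∀ a : A, a = π (M.src a) → 1 ≤ x a) ∧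
    -- distinct policies have distinct flux vectors (injectivity)
    (∀ (π π' : S → A) (x : A → ℝ), M.IsPolicy π → M.IsPolicy π' →
      M.IsFlux γ π x → M.IsFlux γ π' x → π = π') ∧
    -- every vertex of the LP is the flux vector of some policy (surjectivity)
    (∀ x ∈ Set.extremePoints ℝ (M.feasible γ),
      ∃ π : S → A, M.IsPolicy π ∧ M.IsFlux γ π x) ∧
    -- non-degeneracy: every vertex has exactly `|S|` nonzero variables
    (∀ x ∈ Set.extremePoints ℝ (M.feasible γ),
      (Finset.univ.filter fun a : A => x a ≠ 0).card = Fintype.card S) :=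
  simplex_mdp_lp_vertices_policies_general M γ hγ0 hγ1
end

section
/- Let π* be a policy of a uniformly discounted deterministic MDP all of whose gains are nonpositive, i.e., r^{π*}_a ≤ 0 for every action a (in particular, the terminating policy of an execution of the simplex method). Then v^{π*}_s ≥ v^π_s for every policy π and every state s; that is, π* simultaneously maximizes the values of all states. -/
open Finset

/-! Nonpositive gains of `vstar` make `d = v - vstar` satisfy `d s ≤ γ d (step π s)` for the value
`v` of any policy `π`. At a state where `d` is maximal this gives `d ≤ γ d`, so `d ≤ 0` as `γ < 1`. -/

theorem nonpos_of_le_mul_comp {α : Type*} [Finite α] {γ : ℝ} (hγ0 : 0 ≤ γ) (hγ1 : γ < 1)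
    {d : α → ℝ} {f : α → α} (hd : ∀ x, d x ≤ γ * d (f x)) (x : α) : d x ≤ 0 := by
  have : Nonempty α := ⟨x⟩
  obtain ⟨x₀, hx₀⟩ := Finite.exists_max d
  have hmax_nonpos : d x₀ ≤ 0 := by
    have : d x₀ ≤ γ * d x₀ := (hd x₀).trans (mul_le_mul_of_nonneg_left (hx₀ _) hγ0)
    nlinarith
  exact (hx₀ x).trans hmax_nonpos

theorem DetMDP.IsValue.sub_le_mul_sub_step {S A : Type} {M : DetMDP S A} {γ : ℝ} {π : S → A}
    {v w : S → ℝ} (hπ : M.IsPolicy π) (hv : M.IsValue γ π v)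
    (hw : ∀ a : A, M.gain γ w a ≤ 0) (s : S) :
    v s - w s ≤ γ * (v (M.step π s) - w (M.step π s)) := by
  have hgain := hw (π s)
  rw [DetMDP.gain, hπ s] at hgain
  rw [DetMDP.step, hv s]
  linarith

theorem terminal_policy_maximizes_all_values_general
    {S A : Type} [Fintype S]
    (M : DetMDP S A) (γ : ℝ) (hγ0 : 0 ≤ γ) (hγ1 : γ < 1)
    (vstar : S → ℝ)
    (hgain : ∀ a : A, M.gain γ vstar a ≤ 0) :
    ∀ (π : S → A) (v : S → ℝ), M.IsPolicy π → M.IsValue γ π v →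
      ∀ s : S, v s ≤ vstar s := by
  intro π v hπ hv s
  exact sub_nonpos.mp (nonpos_of_le_mul_comp hγ0 hγ1 (hv.sub_le_mul_sub_step hπ hgain) s)

/-- A policy `π*` all of whose gains are nonpositive
simultaneously maximizes the values of all states. -/
theorem terminal_policy_maximizes_all_values
    {S A : Type} [Fintype S] [Fintype A] [DecidableEq S] [DecidableEq A]
    (M : DetMDP S A) (γ : ℝ) (hγ0 : 0 ≤ γ) (hγ1 : γ < 1)
    (πstar : S → A) (hπstar : M.IsPolicy πstar)
    (vstar : S → ℝ) (hvstar : M.IsValue γ πstar vstar)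
    (hgain : ∀ a : A, M.gain γ vstar a ≤ 0) :
    ∀ (π : S → A) (v : S → ℝ), M.IsPolicy π → M.IsValue γ π v →
      ∀ s : S, v s ≤ vstar s :=
  terminal_policy_maximizes_all_values_general M γ hγ0 hγ1 vstar hgain
end

section
/- Let π be a policy of a uniformly discounted deterministic MDP with flux vector x^π and a an action in π. If a is a path action of π then 1 ≤ x^π_a ≤ n, and if a is a cycle action of π then 1/(1−γ) ≤ x^π_a ≤ n/(1−γ). Moreover the total flux on path actions is at most n², and the total flux on cycle actions is at most n/(1−γ). -/
/-!
Transported from actions to states, the flux equations read `y = 1 + γ P y`, where `(P y) s` sums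
`y` over the states that the policy maps to `s`. Unrolling them gives
`y s = ∑ₖ γᵏ · #{s' | fᵏ s' = s}`, the discounted number of walks of the policy graph that
reach `s`. Summing the equations gives `∑ y = n / (1 - γ)`. A state off the cycles is reached
by each walk at most once, so `y s ≤ n`; a state on a cycle is reached at every time `k`, so
`y s ≥ ∑ₖ γᵏ = 1 / (1 - γ)`. Path actions have distinct source states, so their total flux is at
most `n · n`.
-/

open Finset

open Finset Function Filter Topology

namespace Function

variable {α : Type*} {f : α → α} {x : α}

theorem exists_iterate_eq_of_mem_periodicPts (hx : x ∈ periodicPts f) (k : ℕ) :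
    ∃ z, f^[k] z = x :=
  periodicPts_subset_range <| mk_mem_periodicPts (minimalPeriod_pos_of_mem_periodicPts hx)
    ((isPeriodicPt_minimalPeriod f x).iterate k)

theorem eq_of_iterate_eq_of_notMem_periodicPts (hx : x ∉ periodicPts f) {z : α} {i j : ℕ}
    (hi : f^[i] z = x) (hj : f^[j] z = x) : i = j := by
  wlog hij : i < j generalizing i j
  · rcases (not_lt.1 hij).lt_or_eq with h | h
    · exact (this hj hi h).symm
    · exact h.symm
  refine absurd (mk_mem_periodicPts (Nat.sub_pos_of_lt hij) ?_) hx
  change f^[j - i] x = x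
  rw [← hi, ← iterate_add_apply, Nat.sub_add_cancel hij.le, hj, hi]

theorem exists_iterate_eq_self_Icc_iff [Fintype α] :
    (∃ k ∈ Icc 1 (Fintype.card α), f^[k] x = x) ↔ x ∈ periodicPts f := by
  refine ⟨fun ⟨k, hk, hkx⟩ => mk_mem_periodicPts (mem_Icc.1 hk).1 hkx, fun hx => ?_⟩
  exact ⟨minimalPeriod f x,
    mem_Icc.2 ⟨minimalPeriod_pos_of_mem_periodicPts hx, minimalPeriod_le_card⟩,
    iterate_minimalPeriod⟩

end Function

section StateFlux

variable {S : Type*} [Fintype S] [DecidableEq S]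

def IsStateFlux (γ : ℝ) (f : S → S) (y : S → ℝ) : Prop :=
  ∀ s, y s = 1 + γ * ∑ s' ∈ univ.filter (fun s' => f s' = s), y s'

variable {γ : ℝ} {f : S → S} {y : S → ℝ}

namespace IsStateFlux

theorem sum_eq (hy : IsStateFlux γ f y) (hγ : γ ≠ 1) :
    ∑ s, y s = Fintype.card S / (1 - γ) := by
  have h : ∑ s, y s = Fintype.card S + γ * ∑ s, y s := by
    conv_lhs => rw [Finset.sum_congr rfl fun s _ => hy s]
    rw [sum_add_distrib, ← mul_sum, sum_fiberwise]
    simp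
  rw [eq_div_iff (sub_ne_zero.2 hγ.symm)]
  linarith

theorem sum_preimage_iterate_eq (hy : IsStateFlux γ f y) (K : ℕ) (s : S) :
    ∑ s' ∈ univ.filter (fun s' => f^[K] s' = s), y s'
      = #(univ.filter fun s' => f^[K] s' = s)
        + γ * ∑ s' ∈ univ.filter (fun s' => f^[K + 1] s' = s), y s' := by
  rw [Finset.sum_congr rfl fun s' _ => hy s', sum_add_distrib, ← mul_sum,
    sum_fiberwise_eq_sum_filter]
  simp only [sum_const, nsmul_eq_mul, mul_one, mem_filter, mem_univ, true_and,
    iterate_succ_apply]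
  congr!

theorem eq_sum_range_add (hy : IsStateFlux γ f y) (K : ℕ) (s : S) :
    y s = ∑ k ∈ range K, γ ^ k * #(univ.filter fun s' => f^[k] s' = s)
      + γ ^ K * ∑ s' ∈ univ.filter (fun s' => f^[K] s' = s), y s' := by
  induction K with
  | zero =>
    have hs : s ∈ univ.filter fun s' => f^[0] s' = s := mem_filter.2 ⟨mem_univ s, rfl⟩
    rw [range_zero, sum_empty, pow_zero, one_mul, zero_add,
      sum_eq_single_of_mem s hs fun b hb hne => (hne (mem_filter.1 hb).2).elim]
  | succ K ih => rw [ih, hy.sum_preimage_iterate_eq, sum_range_succ]; ring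

theorem hasSum (hy : IsStateFlux γ f y) (hγ0 : 0 ≤ γ) (hγ1 : γ < 1) (s : S) :
    HasSum (fun k => γ ^ k * #(univ.filter fun s' => f^[k] s' = s)) (y s) := by
  rw [hasSum_iff_tendsto_nat_of_nonneg (fun k => by positivity)]
  have hrem : Tendsto (fun K => γ ^ K * ∑ s' ∈ univ.filter (fun s' => f^[K] s' = s), y s')
      atTop (𝓝 0) := by
    refine squeeze_zero_norm (fun K => ?_) (by
      simpa using (tendsto_pow_atTop_nhds_zero_of_lt_one hγ0 hγ1).mul_const (∑ s', ‖y s'‖))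
    rw [norm_mul, norm_pow, Real.norm_of_nonneg hγ0]
    gcongr
    exact (norm_sum_le _ _).trans (sum_le_univ_sum_of_nonneg fun _ => norm_nonneg _)
  have h := (tendsto_const_nhds (x := y s)).sub hrem
  rw [sub_zero] at h
  exact h.congr fun K => by linarith [hy.eq_sum_range_add K s]

theorem nonneg (hy : IsStateFlux γ f y) (hγ0 : 0 ≤ γ) (hγ1 : γ < 1) (s : S) : 0 ≤ y s :=
  (hy.hasSum hγ0 hγ1 s).nonneg fun _ => by positivity

theorem one_le (hy : IsStateFlux γ f y) (hγ0 : 0 ≤ γ) (hγ1 : γ < 1) (s : S) : 1 ≤ y s := by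
  rw [hy s]
  exact le_add_of_nonneg_right
    (mul_nonneg hγ0 (sum_nonneg fun s' _ => hy.nonneg hγ0 hγ1 s'))

theorem le_div_one_sub (hy : IsStateFlux γ f y) (hγ0 : 0 ≤ γ) (hγ1 : γ < 1) (s : S) :
    y s ≤ Fintype.card S / (1 - γ) :=
  hy.sum_eq hγ1.ne ▸ single_le_sum (fun s' _ => hy.nonneg hγ0 hγ1 s') (mem_univ s)

theorem inv_one_sub_le_of_mem_periodicPts (hy : IsStateFlux γ f y) (hγ0 : 0 ≤ γ) (hγ1 : γ < 1)
    {s : S} (hs : s ∈ periodicPts f) : (1 - γ)⁻¹ ≤ y s := by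
  refine hasSum_le (fun k => ?_) (hasSum_geometric_of_lt_one hγ0 hγ1) (hy.hasSum hγ0 hγ1 s)
  obtain ⟨z, hz⟩ := exists_iterate_eq_of_mem_periodicPts hs k
  have hcard : (1 : ℝ) ≤ #(univ.filter fun s' => f^[k] s' = s) := by
    exact_mod_cast card_pos.2 ⟨z, mem_filter.2 ⟨mem_univ z, hz⟩⟩
  exact le_mul_of_one_le_right (pow_nonneg hγ0 k) hcard

theorem le_card_of_notMem_periodicPts (hy : IsStateFlux γ f y) (hγ0 : 0 ≤ γ) (hγ1 : γ < 1)
    {s : S} (hs : s ∉ periodicPts f) : y s ≤ Fintype.card S := by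
  refine hasSum_le_of_sum_le (hy.hasSum hγ0 hγ1 s) fun K => ?_
  have hdisj : (K : Set ℕ).PairwiseDisjoint fun k => univ.filter fun s' => f^[k] s' = s :=
    fun i _ j _ hij => disjoint_left.2 fun z hi hj =>
      hij (eq_of_iterate_eq_of_notMem_periodicPts hs (mem_filter.1 hi).2 (mem_filter.1 hj).2)
  calc ∑ k ∈ K, γ ^ k * #(univ.filter fun s' => f^[k] s' = s)
      ≤ ∑ k ∈ K, (#(univ.filter fun s' => f^[k] s' = s) : ℝ) :=
        sum_le_sum fun k _ => mul_le_of_le_one_left (Nat.cast_nonneg _) (pow_le_one₀ hγ0 hγ1.le)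
    _ = #(K.biUnion fun k => univ.filter fun s' => f^[k] s' = s) := by
        rw [card_biUnion hdisj]; push_cast; rfl
    _ ≤ Fintype.card S := by exact_mod_cast card_le_univ _

end IsStateFlux

end StateFlux

namespace DetMDP

theorem onCycle_iff {S A : Type} [Fintype S] {M : DetMDP S A} {π : S → A} {a : A} :
    M.OnCycle π a ↔ a = π (M.src a) ∧ M.src a ∈ periodicPts (M.step π) :=
  and_congr_right' exists_iterate_eq_self_Icc_iff

variable {S A : Type} [Fintype S] [Fintype A]
  {M : DetMDP S A} {γ : ℝ} {π : S → A} {x : A → ℝ}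

theorem sum_filter_eq_sum_policy (hπ : M.IsPolicy π) (hx : ∀ a, a ≠ π (M.src a) → x a = 0)
    (q : A → Prop) [DecidablePred q] :
    ∑ a ∈ univ.filter q, x a = ∑ s ∈ univ.filter (fun s => q (π s)), x (π s) := by
  classical
  rw [← sum_filter_of_ne (p := fun a => a = π (M.src a)) fun a _ hxa => by_contra (hxa ∘ hx a),
    filter_filter]
  refine sum_nbij' M.src π (fun a ha => ?_) (fun s hs => ?_)
    (fun a ha => (mem_filter.1 ha).2.2.symm) (fun s _ => hπ s)
    (fun a ha => congrArg x (mem_filter.1 ha).2.2)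
  · obtain ⟨-, hq, ha⟩ := mem_filter.1 ha
    exact mem_filter.2 ⟨mem_univ _, ha ▸ hq⟩
  · exact mem_filter.2 ⟨mem_univ _, (mem_filter.1 hs).2, by rw [hπ s]⟩

theorem IsFlux.isStateFlux [DecidableEq S] (hπ : M.IsPolicy π) (hx : M.IsFlux γ π x) :
    IsStateFlux γ (M.step π) (fun s => x (π s)) := by
  intro s
  dsimp only
  have hsrc : ∑ a ∈ univ.filter (fun a => M.src a = s), x a = x (π s) :=
    sum_eq_single_of_mem (π s) (mem_filter.2 ⟨mem_univ _, hπ s⟩)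
      fun b hb hne => hx.1 b (by rwa [(mem_filter.1 hb).2])
  rw [← hsrc, hx.2 s, sum_filter_eq_sum_policy hπ hx.1]
  rfl

end DetMDP

open scoped Classical in
/-- Flux layers: path actions carry flux in `[1, n]`, cycle
actions carry flux in `[1/(1−γ), n/(1−γ)]`; total path flux is at most `n²` and
total cycle flux is at most `n/(1−γ)`. -/
theorem flux_layers
    {S A : Type} [Fintype S] [Fintype A] [DecidableEq S] [DecidableEq A]
    (M : DetMDP S A) (γ : ℝ) (hγ0 : 0 ≤ γ) (hγ1 : γ < 1)
    (π : S → A) (hπ : M.IsPolicy π)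
    (x : A → ℝ) (hx : M.IsFlux γ π x) :
    (∀ a : A, a = π (M.src a) →
      (¬ M.OnCycle π a → 1 ≤ x a ∧ x a ≤ (Fintype.card S : ℝ)) ∧
      (M.OnCycle π a →
        1 / (1 - γ) ≤ x a ∧ x a ≤ (Fintype.card S : ℝ) / (1 - γ))) ∧
    (∑ a ∈ Finset.univ.filter (fun a : A => a = π (M.src a) ∧ ¬ M.OnCycle π a), x a)
        ≤ (Fintype.card S : ℝ) ^ 2 ∧
    (∑ a ∈ Finset.univ.filter (fun a : A => M.OnCycle π a), x a)
        ≤ (Fintype.card S : ℝ) / (1 - γ) := by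
  have hy := hx.isStateFlux hπ
  have onCycle_policy (s : S) : M.OnCycle π (π s) ↔ s ∈ periodicPts (M.step π) := by
    simp [DetMDP.onCycle_iff, hπ s]
  refine ⟨fun a ha => ?_, ?_, ?_⟩
  · rw [ha, onCycle_policy, one_div]
    exact ⟨fun hs => ⟨hy.one_le hγ0 hγ1 _, hy.le_card_of_notMem_periodicPts hγ0 hγ1 hs⟩,
      fun hs => ⟨hy.inv_one_sub_le_of_mem_periodicPts hγ0 hγ1 hs, hy.le_div_one_sub hγ0 hγ1 _⟩⟩
  · rw [DetMDP.sum_filter_eq_sum_policy hπ hx.1 fun a => a = π (M.src a) ∧ ¬M.OnCycle π a]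
    calc _ ≤ ∑ _s : S, (Fintype.card S : ℝ) :=
          (sum_le_sum fun s hs => hy.le_card_of_notMem_periodicPts hγ0 hγ1
            ((onCycle_policy s).not.1 (mem_filter.1 hs).2.2)).trans
          (sum_le_univ_sum_of_nonneg fun _ => Nat.cast_nonneg _)
      _ = (Fintype.card S : ℝ) ^ 2 := by simp [sq]
  · rw [DetMDP.sum_filter_eq_sum_policy hπ hx.1 (M.OnCycle π), ← hy.sum_eq hγ1.ne]
    exact sum_le_univ_sum_of_nonneg (hy.nonneg hγ0 hγ1)
end

section
/- Suppose the simplex method with the highest-gain pivoting rule on a uniformly discounted deterministic MDP pivots from policy π to policy π', and π' contains no cycle that is not a cycle of π. Let π'' be any policy all of whose cycles are cycles of π. Then r^T(x^{π''} − x^{π'}) ≤ (1 − 1/n²)·r^T(x^{π''} − x^π). -/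
open Finset

/-!
Work with the gains `g` of all actions with respect to the value vector `v` of `π`.
Any `z` satisfying the flux equations has `rᵀz = gᵀz + ∑ v`, so differences of rewards of flux
vectors are differences of `g`-weights. Now `gᵀx = 0` since `g` vanishes on `π`, and
`gᵀx' = g(a*) x'(a*) ≥ g(a*)` for the entering action `a*`. On the other hand
`gᵀx'' ≤ n² g(a*)`: an action of `π''` on a cycle lies on a cycle of `π` and has gain `0`, while
each of the at most `n` other states has gain at most `g(a*)` and flux at most `n`, as every state
reaches it at most once. Hence `gᵀ(x'' - x') ≤ gᵀx'' - gᵀx'' / n²`.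
-/

open Function

namespace Function

variable {α : Type} [Fintype α] {f : α → α} {x : α}

lemma exists_mem_Icc_iterate_eq_of_mem_periodicPts (hx : x ∈ periodicPts f) :
    ∃ k ∈ Icc 1 (Fintype.card α), f^[k] x = x :=
  ⟨minimalPeriod f x, mem_Icc.2 ⟨minimalPeriod_pos_of_mem_periodicPts hx, minimalPeriod_le_card⟩,
    isPeriodicPt_minimalPeriod f x⟩

lemma pairwise_disjoint_filter_iterate_eq_of_notMem_periodicPts [DecidableEq α]
    (hx : x ∉ periodicPts f) :
    Pairwise (Disjoint on fun j => ({y | f^[j] y = x} : Finset α)) := by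
  have key : ∀ {i j : ℕ} {y : α}, i < j → f^[i] y = x → f^[j] y ≠ x := by
    intro i j y hij hi hj
    refine hx (mk_mem_periodicPts (Nat.sub_pos_of_lt hij) ?_)
    calc f^[j - i] x = f^[j - i + i] y := by rw [iterate_add_apply, hi]
      _ = x := by rw [Nat.sub_add_cancel hij.le, hj]
  intro i j hij
  simp only [onFun, disjoint_left, mem_filter, mem_univ, true_and]
  intro y hi hj
  rcases hij.lt_or_gt with h | h
  · exact key h hi hj
  · exact key h hj hi

end Function

namespace DetMDP

variable {S A : Type} {M : DetMDP S A} {γ : ℝ} {σ : S → A} {v : S → ℝ} {x : A → ℝ}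

lemma IsPolicy.injective_s6 (hσ : M.IsPolicy σ) : Injective σ :=
  fun s t h => by rw [← hσ s, h, hσ t]

lemma IsPolicy.update [DecidableEq S] (hσ : M.IsPolicy σ) (a : A) :
    M.IsPolicy (update σ (M.src a) a) := by
  intro s
  by_cases h : s = M.src a
  · subst h; simp
  · simp [update_of_ne h, hσ s]

lemma gain_apply_eq_zero (hσ : M.IsPolicy σ) (hv : M.IsValue γ σ v) (s : S) :
    M.gain γ v (σ s) = 0 := by
  rw [gain, hσ s, ← hv s, sub_self]

lemma exists_apply_eq_of_mem_periodicPts [Fintype S] [DecidableEq A] {π σ : S → A}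
    (hcyc : ∀ C, M.IsCycleOf σ C → M.IsCycleOf π C) {s : S} (hs : s ∈ periodicPts (M.step σ)) :
    ∃ t, π t = σ s := by
  obtain ⟨t, -, hC⟩ := hcyc _ ⟨s, exists_mem_Icc_iterate_eq_of_mem_periodicPts hs, rfl⟩
  have hmem : σ s ∈ (range (Fintype.card S)).image fun i => σ ((M.step σ)^[i] s) :=
    mem_image.2 ⟨0, mem_range.2 (Fintype.card_pos_iff.2 ⟨s⟩), rfl⟩
  rw [hC] at hmem
  obtain ⟨i, -, hi⟩ := mem_image.1 hmem
  exact ⟨_, hi⟩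

variable [Fintype S] [Fintype A]

lemma IsPolicy.sum_filter_eq (hσ : M.IsPolicy σ) {h : A → ℝ}
    (h0 : ∀ a, a ≠ σ (M.src a) → h a = 0) (p : A → Prop) [DecidablePred p] :
    ∑ a with p a, h a = ∑ s with p (σ s), h (σ s) := by
  rw [← sum_preimage σ _ hσ.injective_s6.injOn h]
  · congr 1; ext s; simp
  · rintro a - ha
    exact h0 a fun e => ha ⟨_, e.symm⟩

lemma IsPolicy.sum_eq (hσ : M.IsPolicy σ) {h : A → ℝ}
    (h0 : ∀ a, a ≠ σ (M.src a) → h a = 0) : ∑ a, h a = ∑ s, h (σ s) := by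
  simpa using hσ.sum_filter_eq h0 fun _ => True

variable [DecidableEq S]

lemma IsFlux.apply_eq (hσ : M.IsPolicy σ) (hx : M.IsFlux γ σ x) (s : S) :
    x (σ s) = 1 + γ * ∑ t with M.step σ t = s, x (σ t) := by
  have h := hx.2 s
  rw [hσ.sum_filter_eq hx.1, hσ.sum_filter_eq hx.1] at h
  simp only [hσ _, filter_eq', mem_univ, if_true, sum_singleton] at h
  exact h

lemma IsFlux.apply_eq_sum_iterate (hσ : M.IsPolicy σ) (hx : M.IsFlux γ σ x) (s : S) (k : ℕ) :
    x (σ s) = ∑ j ∈ range k, γ ^ j * (#{t | (M.step σ)^[j] t = s} : ℝ)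
      + γ ^ k * ∑ t with (M.step σ)^[k] t = s, x (σ t) := by
  induction k with
  | zero =>
    have hlevel : ∑ t with (M.step σ)^[0] t = s, x (σ t) = x (σ s) :=
      sum_eq_single_of_mem s (mem_filter.2 ⟨mem_univ _, rfl⟩)
        fun t ht hts => absurd (mem_filter.1 ht).2 hts
    rw [hlevel]
    simp
  | succ k ih =>
    have hfibers : ∑ t with (M.step σ)^[k] t = s, ∑ u with M.step σ u = t, x (σ u)
        = ∑ u with (M.step σ)^[k + 1] u = s, x (σ u) := by
      refine (sum_comm' (s' := fun u => {M.step σ u})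
        (t' := {u | (M.step σ)^[k + 1] u = s}) fun t u => ?_).trans (by simp)
      rw [mem_filter_univ, mem_filter_univ, mem_filter_univ, mem_singleton, iterate_succ_apply]
      constructor
      · rintro ⟨ht, rfl⟩; exact ⟨rfl, ht⟩
      · rintro ⟨rfl, hu⟩; exact ⟨hu, rfl⟩
    rw [ih, sum_congr rfl fun t _ => hx.apply_eq hσ t, sum_add_distrib, ← mul_sum, hfibers,
      sum_range_succ]
    simp only [sum_const, nsmul_eq_mul, mul_one, iterate_succ, comp_apply]
    ring

/-- The unrolled flux recurrence has level-`0` term `1` and a tail `γ ^ k * O(1)`. -/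
lemma IsFlux.one_le_s6 (hγ0 : 0 ≤ γ) (hγ1 : γ < 1) (hσ : M.IsPolicy σ) (hx : M.IsFlux γ σ x)
    (s : S) : 1 ≤ x (σ s) := by
  set C := ∑ t, |x (σ t)|
  have hbound : ∀ k, 1 - γ ^ (k + 1) * C ≤ x (σ s) := by
    intro k
    rw [hx.apply_eq_sum_iterate hσ s (k + 1)]
    have hlevels : 1 ≤ ∑ j ∈ range (k + 1), γ ^ j * (#{t | (M.step σ)^[j] t = s} : ℝ) := by
      rw [sum_range_succ']
      have hs : s ∈ ({t | (M.step σ)^[0] t = s} : Finset S) := mem_filter.2 ⟨mem_univ _, rfl⟩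
      have h0 : (1 : ℝ) ≤ #{t | (M.step σ)^[0] t = s} := by exact_mod_cast card_pos.2 ⟨s, hs⟩
      have : 0 ≤ ∑ j ∈ range k, γ ^ (j + 1) * (#{t | (M.step σ)^[j + 1] t = s} : ℝ) := by
        positivity
      simp only [pow_zero, one_mul]
      linarith
    have htail : -C ≤ ∑ t with (M.step σ)^[k + 1] t = s, x (σ t) :=
      calc -C ≤ -∑ t with (M.step σ)^[k + 1] t = s, |x (σ t)| :=
            neg_le_neg (sum_le_sum_of_subset_of_nonneg (subset_univ _) fun _ _ _ => abs_nonneg _)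
        _ ≤ _ := by
            rw [← sum_neg_distrib]
            exact sum_le_sum fun t _ => neg_abs_le _
    nlinarith [pow_nonneg hγ0 (k + 1)]
  have hlim : Filter.Tendsto (fun k => 1 - γ ^ (k + 1) * C) Filter.atTop (nhds 1) := by
    simpa using ((tendsto_pow_atTop_nhds_zero_of_lt_one hγ0 hγ1).comp
      (Filter.tendsto_add_atTop_nat 1)).mul_const C |>.const_sub 1
  exact le_of_tendsto' hlim hbound

lemma IsFlux.le_card (hγ0 : 0 ≤ γ) (hγ1 : γ < 1) (hσ : M.IsPolicy σ) (hx : M.IsFlux γ σ x)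
    {s : S} (hs : s ∉ periodicPts (M.step σ)) : x (σ s) ≤ Fintype.card S := by
  have hdisj := pairwise_disjoint_filter_iterate_eq_of_notMem_periodicPts hs
  -- the levels are disjoint subsets of `S`, so one of the first `|S| + 1` is empty
  obtain ⟨k, hk⟩ : ∃ k, #{t | (M.step σ)^[k] t = s} = 0 := by
    by_contra! hne
    have hsum : Fintype.card S + 1
        ≤ ∑ j ∈ range (Fintype.card S + 1), #{t | (M.step σ)^[j] t = s} := by
      simpa using card_nsmul_le_sum (range (Fintype.card S + 1)) _ 1
        fun j _ => Nat.one_le_iff_ne_zero.2 (hne j)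
    have hunion := card_le_univ ((range (Fintype.card S + 1)).biUnion
      fun j => ({t | (M.step σ)^[j] t = s} : Finset S))
    rw [card_biUnion (hdisj.set_pairwise _)] at hunion
    omega
  rw [hx.apply_eq_sum_iterate hσ s k, card_eq_zero.1 hk, sum_empty, mul_zero, add_zero]
  calc ∑ j ∈ range k, γ ^ j * (#{t | (M.step σ)^[j] t = s} : ℝ)
      ≤ ∑ j ∈ range k, (#{t | (M.step σ)^[j] t = s} : ℝ) :=
        sum_le_sum fun j _ => mul_le_of_le_one_left (Nat.cast_nonneg _) (pow_le_one₀ hγ0 hγ1.le)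
    _ = #((range k).biUnion fun j => ({t | (M.step σ)^[j] t = s} : Finset S)) := by
        rw [card_biUnion (hdisj.set_pairwise _), Nat.cast_sum]
    _ ≤ Fintype.card S := by exact_mod_cast card_le_univ _

lemma sum_gain_mul_eq {z : A → ℝ}
    (hz : ∀ s, ∑ a with M.src a = s, z a = 1 + γ * ∑ a with M.tgt a = s, z a) (v : S → ℝ) :
    ∑ a, M.gain γ v a * z a = ∑ a, M.r a * z a - ∑ s, v s := by
  have hfiber : ∀ f : A → S, ∑ a, v (f a) * z a = ∑ s, v s * ∑ a with f a = s, z a := by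
    intro f
    simp only [mul_sum, sum_filter]
    rw [sum_comm]
    simp
  have hexpand : ∑ a, M.gain γ v a * z a
      = ∑ a, M.r a * z a + γ * ∑ a, v (M.tgt a) * z a - ∑ a, v (M.src a) * z a := by
    rw [mul_sum, ← sum_add_distrib, ← sum_sub_distrib]
    exact sum_congr rfl fun a _ => by rw [gain]; ring
  have hsrc : ∑ a, v (M.src a) * z a
      = ∑ s, v s + γ * ∑ s, v s * ∑ a with M.tgt a = s, z a := by
    rw [hfiber, mul_sum, ← sum_add_distrib]
    exact sum_congr rfl fun s _ => by rw [hz]; ring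
  rw [hexpand, hsrc, hfiber M.tgt]
  ring

lemma IsFlux.sum_reward_mul_sub {σ' : S → A} {x' : A → ℝ} (hx : M.IsFlux γ σ x)
    (hx' : M.IsFlux γ σ' x') (v : S → ℝ) :
    ∑ a, M.r a * (x a - x' a) = ∑ a, M.gain γ v a * x a - ∑ a, M.gain γ v a * x' a := by
  simp only [mul_sub, sum_sub_distrib, sum_gain_mul_eq hx.2, sum_gain_mul_eq hx'.2]
  ring

lemma IsFlux.sum_gain_mul_eq (hσ : M.IsPolicy σ) (hx : M.IsFlux γ σ x) (v : S → ℝ) :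
    ∑ a, M.gain γ v a * x a = ∑ s, M.gain γ v (σ s) * x (σ s) :=
  hσ.sum_eq fun a ha => by rw [hx.1 a ha, mul_zero]

lemma sum_gain_mul_flux_le [DecidableEq A] {π σ : S → A} (hγ0 : 0 ≤ γ) (hγ1 : γ < 1)
    (hπ : M.IsPolicy π) (hv : M.IsValue γ π v) (hσ : M.IsPolicy σ) (hx : M.IsFlux γ σ x)
    (hcyc : ∀ C, M.IsCycleOf σ C → M.IsCycleOf π C) {a : A}
    (hmax : ∀ b, M.gain γ v b ≤ M.gain γ v a) (ha : 0 ≤ M.gain γ v a) :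
    ∑ b, M.gain γ v b * x b ≤ (Fintype.card S : ℝ) ^ 2 * M.gain γ v a := by
  have hstate : ∀ s, M.gain γ v (σ s) * x (σ s) ≤ M.gain γ v a * Fintype.card S := by
    intro s
    by_cases hs : s ∈ periodicPts (M.step σ)
    · obtain ⟨t, ht⟩ := exists_apply_eq_of_mem_periodicPts hcyc hs
      rw [← ht, gain_apply_eq_zero hπ hv, zero_mul]
      positivity
    · calc M.gain γ v (σ s) * x (σ s) ≤ M.gain γ v a * x (σ s) :=
            mul_le_mul_of_nonneg_right (hmax _) (zero_le_one.trans (hx.one_le_s6 hγ0 hγ1 hσ s))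
        _ ≤ M.gain γ v a * Fintype.card S :=
            mul_le_mul_of_nonneg_left (hx.le_card hγ0 hγ1 hσ hs) ha
  calc ∑ b, M.gain γ v b * x b = ∑ s, M.gain γ v (σ s) * x (σ s) := hx.sum_gain_mul_eq hσ v
    _ ≤ ∑ _s : S, M.gain γ v a * Fintype.card S := sum_le_sum fun s _ => hstate s
    _ = (Fintype.card S : ℝ) ^ 2 * M.gain γ v a := by
        rw [sum_const, card_univ, nsmul_eq_mul]; ring

lemma sum_gain_mul_flux_update [DecidableEq A] {π : S → A} (hπ : M.IsPolicy π)
    (hv : M.IsValue γ π v) (a : A) (hx : M.IsFlux γ (update π (M.src a) a) x) :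
    ∑ b, M.gain γ v b * x b = M.gain γ v a * x a := by
  rw [hx.sum_gain_mul_eq (hπ.update a) v, sum_eq_single (M.src a)]
  · simp
  · intro s _ hs
    rw [update_of_ne hs, gain_apply_eq_zero hπ hv, zero_mul]
  · simp

end DetMDP

theorem path_pivot_contraction_general
    {S A : Type} [Fintype S] [Fintype A] [DecidableEq S] [DecidableEq A]
    (M : DetMDP S A) (γ : ℝ) (hγ0 : 0 ≤ γ) (hγ1 : γ < 1)
    (π π' π'' : S → A)
    (hπ : M.IsPolicy π) (hπ'' : M.IsPolicy π'')
    (hpivot : M.SimplexPivot γ π π')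
    (hsub : ∀ C : Finset A, M.IsCycleOf π'' C → M.IsCycleOf π C)
    (x x' x'' : A → ℝ)
    (hx : M.IsFlux γ π x) (hx' : M.IsFlux γ π' x') (hx'' : M.IsFlux γ π'' x'') :
    ∑ a : A, M.r a * (x'' a - x' a)
      ≤ (1 - 1 / (Fintype.card S : ℝ) ^ 2) * ∑ a : A, M.r a * (x'' a - x a) := by
  obtain ⟨v, a, hv, hpos, hmax, rfl⟩ := hpivot
  have hx0 : ∑ b, M.gain γ v b * x b = 0 := by
    simp [hx.sum_gain_mul_eq hπ v, DetMDP.gain_apply_eq_zero hπ hv]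
  have hx'a : 1 ≤ x' a := by simpa using hx'.one_le_s6 hγ0 hγ1 (hπ.update a) (M.src a)
  have hx''le := DetMDP.sum_gain_mul_flux_le hγ0 hγ1 hπ hv hπ'' hx'' hsub hmax hpos.le
  have hn : (0 : ℝ) < (Fintype.card S : ℝ) ^ 2 := by
    have : 0 < Fintype.card S := Fintype.card_pos_iff.2 ⟨M.src a⟩
    positivity
  rw [hx''.sum_reward_mul_sub hx' v, hx''.sum_reward_mul_sub hx v, hx0,
    DetMDP.sum_gain_mul_flux_update hπ hv a hx']
  set D := ∑ b, M.gain γ v b * x'' b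
  have hD : D / (Fintype.card S : ℝ) ^ 2 ≤ M.gain γ v a := by
    rw [div_le_iff₀ hn]; linarith
  have hgain : M.gain γ v a ≤ M.gain γ v a * x' a := le_mul_of_one_le_right hpos.le hx'a
  rw [sub_zero, one_sub_mul, one_div_mul_eq_div]
  linarith

/-- If the simplex method pivots from `π` to `π'` without
creating a new cycle, then for any policy `π''` all of whose cycles are cycles of
`π`, `rᵀ(x^{π''} − x^{π'}) ≤ (1 − 1/n²)·rᵀ(x^{π''} − x^π)`. -/
theorem path_pivot_contraction
    {S A : Type} [Fintype S] [Fintype A] [DecidableEq S] [DecidableEq A]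
    (M : DetMDP S A) (γ : ℝ) (hγ0 : 0 ≤ γ) (hγ1 : γ < 1)
    (π π' π'' : S → A)
    (hπ : M.IsPolicy π) (hπ'' : M.IsPolicy π'')
    (hpivot : M.SimplexPivot γ π π')
    (hnonew : ∀ C : Finset A, M.IsCycleOf π' C → M.IsCycleOf π C)
    (hsub : ∀ C : Finset A, M.IsCycleOf π'' C → M.IsCycleOf π C)
    (x x' x'' : A → ℝ)
    (hx : M.IsFlux γ π x) (hx' : M.IsFlux γ π' x') (hx'' : M.IsFlux γ π'' x'') :
    ∑ a : A, M.r a * (x'' a - x' a)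
      ≤ (1 - 1 / (Fintype.card S : ℝ) ^ 2) * ∑ a : A, M.r a * (x'' a - x a) :=
  path_pivot_contraction_general M γ hγ0 hγ1 π π' π'' hπ hπ'' hpivot hsub x x' x'' hx hx' hx''
end

section
/- In any execution of the simplex method with the highest-gain pivoting rule on a uniformly discounted deterministic MDP, starting from any policy in the execution, within (m+n)·⌈log_{n²/(n²−1)} n²⌉ = O(n² m log n) iterations either the execution terminates or some iteration creates a new cycle. -/
open Finset

/-!
Fix a policy `σ` and let `U` be the pointwise best value of a policy all of whose cycles are
cycles of `σ`. While no new cycle appears, every later policy `ρ` lies in that class, so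
`v^ρ ≤ U`, and the potential `∑ (U - v^ρ)` drops by the largest gain at every pivot. Following
the maximising policy down to its cycle shows that the potential is at most `n²` times the largest
gain, so it shrinks by a factor `1 - 1/n²` per pivot and after `⌈log_{n²/(n²-1)} n²⌉` pivots it is
below `1/n²` of its value at `σ`. Splitting that value along the trees and cycles of `σ`, some
action of `σ` has `-gain` (with respect to `U`) above this bound, or some cycle state of `σ` has
`U - v^σ` above it; such an action is never used again, and such a state never again lies on a
cycle. So every phase of that length destroys one of the `m + n` actions and states for good.
-/

section Recursion

variable {S : Type} {γ : ℝ} {σ : S → S} {D h : S → ℝ}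

theorem nonneg_of_eq_mul_comp_add (hγ0 : 0 ≤ γ) (hγ1 : γ < 1) {T : Finset S}
    (hT : ∀ x ∈ T, σ x ∈ T) (hh : ∀ x ∈ T, 0 ≤ h x)
    (hD : ∀ x ∈ T, D x = γ * D (σ x) + h x) : ∀ x ∈ T, 0 ≤ D x := by
  intro x hx
  obtain ⟨x₀, hx₀, hmin⟩ := T.exists_min_image D ⟨x, hx⟩
  have hσx₀ := hmin _ (hT x₀ hx₀)
  have : 0 ≤ D x₀ := by nlinarith [hD x₀ hx₀, hh x₀ hx₀]
  exact this.trans (hmin x hx)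

theorem eq_zero_of_eq_mul_comp (hγ0 : 0 ≤ γ) (hγ1 : γ < 1) {T : Finset S}
    (hT : ∀ x ∈ T, σ x ∈ T) (hD : ∀ x ∈ T, D x = γ * D (σ x)) : ∀ x ∈ T, D x = 0 := by
  intro x hx
  have h₁ := nonneg_of_eq_mul_comp_add (D := D) (h := 0) hγ0 hγ1 hT (fun _ _ => le_rfl)
    (fun y hy => by simp [hD y hy]) x hx
  have h₂ := nonneg_of_eq_mul_comp_add (D := -D) (h := 0) hγ0 hγ1 hT (fun _ _ => le_rfl)
    (fun y hy => by simp [hD y hy]) x hx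
  simp only [Pi.neg_apply, neg_nonneg] at h₂
  linarith

theorem le_of_eq_mul_comp_add (hγ0 : 0 ≤ γ) (hγ1 : γ ≤ 1) (hD : ∀ x, D x = γ * D (σ x) + h x)
    {c e : ℝ} (hc : 0 ≤ c) (he : 0 ≤ e) (k : ℕ) (x : S) (hh : ∀ i < k, h (σ^[i] x) ≤ c)
    (htail : D (σ^[k] x) ≤ e) : D x ≤ k * c + e := by
  induction k generalizing x with
  | zero => simpa using htail
  | succ k ih =>
    have hnext : D (σ x) ≤ k * c + e :=
      ih (σ x)
        (fun i hi => by simpa only [← Function.iterate_succ_apply] using hh (i + 1) (by omega))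
        (by rwa [← Function.iterate_succ_apply])
    have hx := hh 0 (by omega)
    have hk : (0 : ℝ) ≤ k * c + e := by positivity
    rw [hD x]
    push_cast
    simp only [Function.iterate_zero, id_eq] at hx
    nlinarith

end Recursion

theorem one_sub_inv_pow_ceil_log_le {x : ℝ} (hx : 1 < x) :
    (1 - x⁻¹) ^ ⌈Real.log x / Real.log (x / (x - 1))⌉₊ ≤ x⁻¹ := by
  set b := x / (x - 1)
  have hb : 1 < b := by rw [lt_div_iff₀ (by linarith)]; linarith
  have hlog : Real.log x ≤ ⌈Real.log x / Real.log b⌉₊ * Real.log b := by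
    rw [← div_le_iff₀ (Real.log_pos hb)]
    exact Nat.le_ceil _
  have hpow : x ≤ b ^ ⌈Real.log x / Real.log b⌉₊ := by
    rwa [← Real.log_le_log_iff (by linarith) (by positivity), Real.log_pow]
  have hinv : 1 - x⁻¹ = b⁻¹ := by
    simp only [b, inv_div]
    field_simp
  rw [hinv, inv_pow]
  exact inv_anti₀ (by linarith) hpow

noncomputable def phaseLength (n : ℕ) : ℕ :=
  ⌈Real.log ((n : ℝ) ^ 2) / Real.log ((n : ℝ) ^ 2 / ((n : ℝ) ^ 2 - 1))⌉₊

theorem one_sub_inv_sq_pow_phaseLength_le {n : ℕ} (hn : 2 ≤ n) :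
    (1 - ((n : ℝ) ^ 2)⁻¹) ^ phaseLength n ≤ ((n : ℝ) ^ 2)⁻¹ :=
  one_sub_inv_pow_ceil_log_le (by
    have : (2 : ℝ) ≤ n := by exact_mod_cast hn
    nlinarith)

theorem one_sub_inv_sq_nonneg (n : ℕ) : 0 ≤ 1 - ((n : ℝ) ^ 2)⁻¹ := by
  rcases Nat.eq_zero_or_pos n with rfl | hn
  · simp
  · have : (1 : ℝ) ≤ (n : ℝ) ^ 2 := one_le_pow₀ (by exact_mod_cast hn)
    linarith [inv_le_one_of_one_le₀ this]

namespace DetMDP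

section Value

variable {S A : Type} [Fintype S] (M : DetMDP S A) {γ : ℝ}

theorem exists_isValue (hγ0 : 0 ≤ γ) (hγ1 : γ < 1) (π : S → A) : ∃ v, M.IsValue γ π v := by
  let T : (S → ℝ) → S → ℝ := fun v s => M.r (π s) + γ * v (M.tgt (π s))
  have hT : ContractingWith ⟨γ, hγ0⟩ T := by
    refine ⟨by exact_mod_cast hγ1, LipschitzWith.of_dist_le_mul fun u v => ?_⟩
    refine (dist_pi_le_iff (by positivity)).2 fun s => ?_
    calc dist (T u s) (T v s) = γ * dist (u (M.tgt (π s))) (v (M.tgt (π s))) := by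
          simp only [T, Real.dist_eq, add_sub_add_left_eq_sub, ← mul_sub, abs_mul,
            abs_of_nonneg hγ0]
      _ ≤ γ * dist u v := mul_le_mul_of_nonneg_left (dist_le_pi_dist u v _) hγ0
  exact ⟨_, fun s => (congrFun hT.fixedPoint_isFixedPt s).symm⟩

open Classical in
noncomputable def val (γ : ℝ) (π : S → A) : S → ℝ :=
  if h : ∃ v, M.IsValue γ π v then h.choose else 0

theorem isValue_val (hγ0 : 0 ≤ γ) (hγ1 : γ < 1) (π : S → A) : M.IsValue γ π (M.val γ π) := by
  rw [val, dif_pos (M.exists_isValue hγ0 hγ1 π)]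
  exact (M.exists_isValue hγ0 hγ1 π).choose_spec

theorem eq_val_of_isValue (hγ0 : 0 ≤ γ) (hγ1 : γ < 1) {π : S → A} {v : S → ℝ}
    (hv : M.IsValue γ π v) : v = M.val γ π := by
  have hw := M.isValue_val hγ0 hγ1 π
  funext x
  have := eq_zero_of_eq_mul_comp (D := fun x => v x - M.val γ π x) (σ := M.step π) hγ0 hγ1
    (T := univ) (fun _ _ => mem_univ _)
    (fun y _ => by simp only [step]; linarith [hv y, hw y]) x (mem_univ x)
  linarith

end Value

section Policy

variable {S A : Type} (M : DetMDP S A) {γ : ℝ}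

theorem isPolicy_update [DecidableEq S] {π : S → A} (hπ : M.IsPolicy π) (a : A) :
    M.IsPolicy (Function.update π (M.src a) a) := by
  intro s
  by_cases hs : s = M.src a
  · subst hs; simp
  · simp [hs, hπ s]

theorem gain_self_eq_zero {π : S → A} {v : S → ℝ} (hπ : M.IsPolicy π) (hv : M.IsValue γ π v)
    (x : S) : M.gain γ v (π x) = 0 := by
  simp only [gain, hπ x]
  linarith [hv x]

theorem sub_eq_mul_add_gain {π : S → A} {w : S → ℝ} (hw : M.IsValue γ π w) (hπ : M.IsPolicy π)
    (u : S → ℝ) (x : S) :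
    w x - u x = γ * (w (M.step π x) - u (M.step π x)) + M.gain γ u (π x) := by
  simp only [gain, hπ x, step]
  linarith [hw x]

end Policy

section Improvement

variable {S A : Type} [Fintype S] [DecidableEq S] (M : DetMDP S A) {γ : ℝ}

theorem val_le_val_update (hγ0 : 0 ≤ γ) (hγ1 : γ < 1) {π : S → A} (hπ : M.IsPolicy π) {a : A}
    (ha : 0 ≤ M.gain γ (M.val γ π) a) (x : S) :
    M.val γ π x ≤ M.val γ (Function.update π (M.src a) a) x := by
  set π' := Function.update π (M.src a) a
  have hgain : ∀ y ∈ univ, 0 ≤ M.gain γ (M.val γ π) (π' y) := by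
    intro y _
    by_cases hy : y = M.src a
    · simpa [π', hy] using ha
    · simp [π', hy, M.gain_self_eq_zero hπ (M.isValue_val hγ0 hγ1 π) y]
  have := nonneg_of_eq_mul_comp_add hγ0 hγ1 (fun _ _ => mem_univ _) hgain
    (fun y _ => M.sub_eq_mul_add_gain (M.isValue_val hγ0 hγ1 π') (M.isPolicy_update hπ a)
      (M.val γ π) y) x (mem_univ x)
  linarith

theorem gain_le_sum_val_update_sub (hγ0 : 0 ≤ γ) (hγ1 : γ < 1) {π : S → A} (hπ : M.IsPolicy π)
    {a : A} (ha : 0 ≤ M.gain γ (M.val γ π) a) :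
    M.gain γ (M.val γ π) a ≤ ∑ x, (M.val γ (Function.update π (M.src a) a) x - M.val γ π x) := by
  set π' := Function.update π (M.src a) a
  have hle := M.val_le_val_update hγ0 hγ1 hπ ha
  have hrec := M.sub_eq_mul_add_gain (M.isValue_val hγ0 hγ1 π') (M.isPolicy_update hπ a)
    (M.val γ π) (M.src a)
  have hnext := mul_nonneg hγ0 (sub_nonneg.2 (hle (M.step π' (M.src a))))
  calc M.gain γ (M.val γ π) a ≤ M.val γ π' (M.src a) - M.val γ π (M.src a) := by
        simp only [π', Function.update_self] at hrec hnext ⊢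
        linarith
    _ ≤ _ := single_le_sum (fun x _ => sub_nonneg.2 (hle x)) (mem_univ _)

theorem val_le_of_simplexPivot (hγ0 : 0 ≤ γ) (hγ1 : γ < 1) {π π' : S → A} (hπ : M.IsPolicy π)
    (hp : M.SimplexPivot γ π π') (x : S) : M.val γ π x ≤ M.val γ π' x := by
  obtain ⟨v, a, hv, hpos, -, rfl⟩ := hp
  obtain rfl := M.eq_val_of_isValue hγ0 hγ1 hv
  exact M.val_le_val_update hγ0 hγ1 hπ hpos.le x

end Improvement

section Cycles

variable {S A : Type} [Fintype S] (M : DetMDP S A)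

def IsRecurrent (π : S → A) (x : S) : Prop :=
  ∃ k ∈ Finset.Icc 1 (Fintype.card S), (M.step π)^[k] x = x

theorem exists_isRecurrent_iterate (π : S → A) (x : S) :
    ∃ i < Fintype.card S, M.IsRecurrent π ((M.step π)^[i] x) := by
  obtain ⟨i, j, hne, heq⟩ := Fintype.exists_ne_map_eq_of_card_lt
    (fun i : Fin (Fintype.card S + 1) => (M.step π)^[i] x) (by simp)
  wlog hij : i < j generalizing i j
  · exact this j i hne.symm heq.symm (lt_of_le_of_ne (not_lt.1 hij) hne.symm)
  have hj := j.isLt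
  rw [Fin.lt_def] at hij
  refine ⟨i, by omega, j - i, Finset.mem_Icc.2 ⟨by omega, by omega⟩, ?_⟩
  rw [← Function.iterate_add_apply, Nat.sub_add_cancel hij.le]
  exact heq.symm

open Classical in
noncomputable def hitTime (π : S → A) (x : S) : ℕ :=
  Nat.find ((M.exists_isRecurrent_iterate π x).imp fun _ => And.right)

theorem hitTime_lt_card (π : S → A) (x : S) : M.hitTime π x < Fintype.card S := by
  classical
  obtain ⟨i, hi, hrec⟩ := M.exists_isRecurrent_iterate π x
  exact (Nat.find_min' _ hrec).trans_lt hi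

theorem isRecurrent_iterate_hitTime (π : S → A) (x : S) :
    M.IsRecurrent π ((M.step π)^[M.hitTime π x] x) := by
  classical
  exact Nat.find_spec ((M.exists_isRecurrent_iterate π x).imp fun _ => And.right)

theorem not_isRecurrent_of_lt_hitTime {π : S → A} {x : S} {i : ℕ} (hi : i < M.hitTime π x) :
    ¬ M.IsRecurrent π ((M.step π)^[i] x) := by
  classical
  exact Nat.find_min _ hi

theorem hitTime_eq_zero {π : S → A} {x : S} (hx : M.IsRecurrent π x) : M.hitTime π x = 0 := by
  classical
  exact Nat.find_eq_zero _ |>.2 hx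

theorem sum_hitTime_le (π : S → A) : ∑ x, M.hitTime π x ≤ (Fintype.card S - 1) ^ 2 := by
  classical
  rcases isEmpty_or_nonempty S with hS | ⟨⟨x⟩⟩
  · simp
  obtain ⟨i, -, hrec⟩ := M.exists_isRecurrent_iterate π x
  rw [← add_sum_erase _ _ (mem_univ _), M.hitTime_eq_zero hrec, zero_add, sq]
  calc ∑ y ∈ univ.erase ((M.step π)^[i] x), M.hitTime π y
      ≤ #(univ.erase ((M.step π)^[i] x)) • (Fintype.card S - 1) :=
        sum_le_card_nsmul _ _ _ fun y _ => by have := M.hitTime_lt_card π y; omega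
    _ = (Fintype.card S - 1) * (Fintype.card S - 1) := by
        rw [card_erase_of_mem (mem_univ _), card_univ, smul_eq_mul]

variable [DecidableEq A]

theorem exists_isCycleOf_mem {π : S → A} {x : S} (hx : M.IsRecurrent π x) :
    ∃ C, M.IsCycleOf π C ∧ π x ∈ C :=
  ⟨_, ⟨x, hx, rfl⟩, mem_image.2 ⟨0, mem_range.2 (Fintype.card_pos_iff.2 ⟨x⟩), rfl⟩⟩

theorem eq_of_mem_of_isCycleOf {π : S → A} (hπ : M.IsPolicy π) {C : Finset A}
    (hC : M.IsCycleOf π C) {a : A} (ha : a ∈ C) : π (M.src a) = a := by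
  obtain ⟨s, -, rfl⟩ := hC
  obtain ⟨i, -, rfl⟩ := mem_image.1 ha
  rw [hπ]

variable [DecidableEq S]

theorem step_mem_of_isCycleOf {π : S → A} (hπ : M.IsPolicy π) {C : Finset A}
    (hC : M.IsCycleOf π C) {x : S} (hx : x ∈ C.image M.src) : M.step π x ∈ C.image M.src := by
  obtain ⟨s, ⟨k, hk, hper⟩, rfl⟩ := hC
  obtain ⟨_, ha, rfl⟩ := mem_image.1 hx
  obtain ⟨i, -, rfl⟩ := mem_image.1 ha
  rw [Finset.mem_Icc] at hk
  have hmod : (i + 1) % k < Fintype.card S := (Nat.mod_lt _ (by omega)).trans_le hk.2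
  refine mem_image.2 ⟨_, mem_image.2 ⟨_, mem_range.2 hmod, rfl⟩, ?_⟩
  rw [hπ, hπ, (show Function.IsPeriodicPt (M.step π) k s from hper).iterate_mod_apply,
    Function.iterate_succ_apply']

theorem val_eq_of_isCycleOf {γ : ℝ} (hγ0 : 0 ≤ γ) (hγ1 : γ < 1) {π π' : S → A}
    (hπ : M.IsPolicy π) (hπ' : M.IsPolicy π') {C : Finset A} (hC : M.IsCycleOf π C)
    (hC' : M.IsCycleOf π' C) {y : S} (hy : y ∈ C.image M.src) :
    M.val γ π y = M.val γ π' y := by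
  have hagree : ∀ x ∈ C.image M.src, π x = π' x := by
    intro x hx
    obtain ⟨a, ha, rfl⟩ := mem_image.1 hx
    rw [M.eq_of_mem_of_isCycleOf hπ hC ha, M.eq_of_mem_of_isCycleOf hπ' hC' ha]
  have := eq_zero_of_eq_mul_comp (D := fun x => M.val γ π x - M.val γ π' x) hγ0 hγ1
    (fun _ => M.step_mem_of_isCycleOf hπ hC)
    (fun x hx => by
      have h₁ := M.isValue_val hγ0 hγ1 π x
      have h₂ := M.isValue_val hγ0 hγ1 π' x
      rw [← hagree x hx] at h₂
      simp only [step]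
      linarith) y hy
  linarith

theorem exists_new_cycle_of_simplexPivot {γ : ℝ} (hn : Fintype.card S ≤ 1) {ρ ρ' : S → A}
    (hρ : M.IsPolicy ρ) (hp : M.SimplexPivot γ ρ ρ') :
    ∃ C, M.IsCycleOf ρ' C ∧ ¬ M.IsCycleOf ρ C := by
  obtain ⟨v, a, hv, hpos, -, rfl⟩ := hp
  have : Subsingleton S := Fintype.card_le_one_iff_subsingleton.1 hn
  have hcard : Fintype.card S = 1 := le_antisymm hn (Fintype.card_pos_iff.2 ⟨M.src a⟩)
  refine ⟨{a}, ⟨M.src a, ⟨1, by simp [hcard], Subsingleton.elim _ _⟩, by simp [hcard]⟩, ?_⟩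
  rintro ⟨s, -, hs⟩
  simp only [hcard, range_one, image_singleton, Function.iterate_zero, id_eq,
    singleton_inj] at hs
  linarith [hs ▸ M.gain_self_eq_zero hρ hv s]

end Cycles

section Potential

variable {S A : Type} [Fintype S] [Fintype A] [DecidableEq S] [DecidableEq A] (M : DetMDP S A)
  {γ : ℝ}

open Classical in
noncomputable def cyclePolicies (σ : S → A) : Finset (S → A) :=
  univ.filter fun π => M.IsPolicy π ∧ ∀ C, M.IsCycleOf π C → M.IsCycleOf σ C

theorem mem_cyclePolicies {σ π : S → A} :
    π ∈ M.cyclePolicies σ ↔ M.IsPolicy π ∧ ∀ C, M.IsCycleOf π C → M.IsCycleOf σ C := by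
  simp [cyclePolicies]

/-- Bounds the values of every policy that a run reaches from `σ` without creating a new cycle. -/
noncomputable def cycleOptVal (γ : ℝ) (σ : S → A) (x : S) : ℝ :=
  if h : (M.cyclePolicies σ).Nonempty then (M.cyclePolicies σ).sup' h fun π => M.val γ π x
  else 0

theorem val_le_cycleOptVal {σ π : S → A} (hπ : π ∈ M.cyclePolicies σ) (x : S) :
    M.val γ π x ≤ M.cycleOptVal γ σ x := by
  rw [cycleOptVal, dif_pos ⟨π, hπ⟩]
  exact le_sup' (fun π => M.val γ π x) hπ

theorem exists_val_eq_cycleOptVal {σ : S → A} (hσ : M.IsPolicy σ) (x : S) :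
    ∃ π ∈ M.cyclePolicies σ, M.val γ π x = M.cycleOptVal γ σ x := by
  have hne : (M.cyclePolicies σ).Nonempty := ⟨σ, M.mem_cyclePolicies.2 ⟨hσ, fun _ => id⟩⟩
  rw [cycleOptVal, dif_pos hne]
  obtain ⟨π, hπ, heq⟩ := exists_mem_eq_sup' hne fun π => M.val γ π x
  exact ⟨π, hπ, heq.symm⟩

theorem val_eq_of_isRecurrent (hγ0 : 0 ≤ γ) (hγ1 : γ < 1) {σ π : S → A} (hσ : M.IsPolicy σ)
    (hπ : π ∈ M.cyclePolicies σ) {y : S} (hy : M.IsRecurrent π y) :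
    M.val γ π y = M.val γ σ y := by
  obtain ⟨hπpol, hcyc⟩ := M.mem_cyclePolicies.1 hπ
  obtain ⟨C, hC, hyC⟩ := M.exists_isCycleOf_mem hy
  exact M.val_eq_of_isCycleOf hγ0 hγ1 hπpol hσ hC (hcyc C hC)
    (mem_image.2 ⟨π y, hyC, hπpol y⟩)

theorem neg_gain_le_cycleOptVal_sub_val (hγ0 : 0 ≤ γ) (hγ1 : γ < 1) {σ ρ : S → A}
    (hρ : ρ ∈ M.cyclePolicies σ) {a : A} (ha : ρ (M.src a) = a) :
    -M.gain γ (M.cycleOptVal γ σ) a ≤ M.cycleOptVal γ σ (M.src a) - M.val γ ρ (M.src a) := by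
  have hv := M.isValue_val hγ0 hγ1 ρ (M.src a)
  rw [ha] at hv
  have := mul_le_mul_of_nonneg_left (M.val_le_cycleOptVal (γ := γ) hρ (M.tgt a)) hγ0
  simp only [gain]
  linarith

theorem cycleOptVal_sub_val_le (hγ0 : 0 ≤ γ) (hγ1 : γ < 1) {σ ρ : S → A} (hσ : M.IsPolicy σ)
    (hσρ : ∀ x, M.val γ σ x ≤ M.val γ ρ x) {g : ℝ} (hg0 : 0 ≤ g)
    (hg : ∀ a, M.gain γ (M.val γ ρ) a ≤ g) (x : S) :
    M.cycleOptVal γ σ x - M.val γ ρ x ≤ Fintype.card S * g := by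
  obtain ⟨π, hπ, hπx⟩ := M.exists_val_eq_cycleOptVal (γ := γ) hσ x
  have hπpol := (M.mem_cyclePolicies.1 hπ).1
  -- the tail vanishes: `π` ends on a cycle of `σ`, where it is worth `v^σ ≤ v^ρ`
  have hle := le_of_eq_mul_comp_add (D := fun z => M.val γ π z - M.val γ ρ z)
    (h := fun z => M.gain γ (M.val γ ρ) (π z)) hγ0 hγ1.le
    (M.sub_eq_mul_add_gain (M.isValue_val hγ0 hγ1 π) hπpol (M.val γ ρ)) hg0 le_rfl
    (M.hitTime π x) x (fun i _ => hg _) (by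
      have hrec := M.isRecurrent_iterate_hitTime π x
      rw [M.val_eq_of_isRecurrent hγ0 hγ1 hσ hπ hrec]
      linarith [hσρ ((M.step π)^[M.hitTime π x] x)])
  have hhit : (M.hitTime π x : ℝ) ≤ Fintype.card S := by
    exact_mod_cast (M.hitTime_lt_card π x).le
  rw [← hπx]
  calc M.val γ π x - M.val γ ρ x ≤ M.hitTime π x * g + 0 := hle
    _ ≤ Fintype.card S * g := by
        rw [add_zero]
        exact mul_le_mul_of_nonneg_right hhit hg0

noncomputable def potential (γ : ℝ) (σ ρ : S → A) : ℝ :=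
  ∑ x, (M.cycleOptVal γ σ x - M.val γ ρ x)

theorem sub_val_le_potential {σ ρ : S → A} (hρ : ρ ∈ M.cyclePolicies σ) (x : S) :
    M.cycleOptVal γ σ x - M.val γ ρ x ≤ M.potential γ σ ρ :=
  single_le_sum (fun y _ => sub_nonneg.2 (M.val_le_cycleOptVal hρ y)) (mem_univ x)

theorem potential_le_of_simplexPivot (hγ0 : 0 ≤ γ) (hγ1 : γ < 1) {σ ρ ρ' : S → A}
    (hσ : M.IsPolicy σ) (hρ : M.IsPolicy ρ) (hp : M.SimplexPivot γ ρ ρ')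
    (hσρ : ∀ x, M.val γ σ x ≤ M.val γ ρ x) :
    M.potential γ σ ρ' ≤ (1 - ((Fintype.card S : ℝ) ^ 2)⁻¹) * M.potential γ σ ρ := by
  obtain ⟨v, a, hv, hpos, hmax, rfl⟩ := hp
  obtain rfl := M.eq_val_of_isValue hγ0 hγ1 hv
  have hS : (0 : ℝ) < (Fintype.card S : ℝ) ^ 2 := by
    have : 0 < Fintype.card S := Fintype.card_pos_iff.2 ⟨M.src a⟩
    positivity
  have hgain := M.gain_le_sum_val_update_sub hγ0 hγ1 hρ hpos.le
  have hbound : M.potential γ σ ρ ≤ (Fintype.card S : ℝ) ^ 2 * M.gain γ (M.val γ ρ) a := by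
    calc M.potential γ σ ρ ≤ ∑ _x : S, Fintype.card S * M.gain γ (M.val γ ρ) a :=
          sum_le_sum fun x _ => M.cycleOptVal_sub_val_le hγ0 hγ1 hσ hσρ hpos.le hmax x
      _ = _ := by rw [sum_const, card_univ, nsmul_eq_mul]; ring
  have hdrop : M.potential γ σ (Function.update ρ (M.src a) a) = M.potential γ σ ρ -
      ∑ x, (M.val γ (Function.update ρ (M.src a) a) x - M.val γ ρ x) := by
    simp only [potential, ← sum_sub_distrib]
    exact sum_congr rfl fun x _ => by ring
  have hshare : ((Fintype.card S : ℝ) ^ 2)⁻¹ * M.potential γ σ ρ ≤ M.gain γ (M.val γ ρ) a := by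
    rwa [inv_mul_le_iff₀ hS]
  rw [hdrop, sub_mul, one_mul]
  linarith

theorem potential_self_pos (hγ0 : 0 ≤ γ) (hγ1 : γ < 1) {σ ρ : S → A} (hσ : M.IsPolicy σ)
    (hp : M.SimplexPivot γ σ ρ) (hρ : ρ ∈ M.cyclePolicies σ) : 0 < M.potential γ σ σ := by
  obtain ⟨v, a, hv, hpos, -, rfl⟩ := hp
  obtain rfl := M.eq_val_of_isValue hγ0 hγ1 hv
  calc 0 < M.gain γ (M.val γ σ) a := hpos
    _ ≤ ∑ x, (M.val γ (Function.update σ (M.src a) a) x - M.val γ σ x) :=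
        M.gain_le_sum_val_update_sub hγ0 hγ1 hσ hpos.le
    _ ≤ M.potential γ σ σ :=
        sum_le_sum fun x _ => by linarith [M.val_le_cycleOptVal (γ := γ) hρ x]

theorem potential_self_le (hγ0 : 0 ≤ γ) (hγ1 : γ < 1) {σ : S → A} (hσ : M.IsPolicy σ) {c : ℝ}
    (hc : 0 ≤ c) (htree : ∀ y, ¬ M.IsRecurrent σ y → -M.gain γ (M.cycleOptVal γ σ) (σ y) ≤ c)
    (hcyc : ∀ y, M.IsRecurrent σ y → M.cycleOptVal γ σ y - M.val γ σ y ≤ c) :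
    M.potential γ σ σ ≤ (((Fintype.card S - 1) ^ 2 : ℕ) + Fintype.card S) * c := by
  have hrec : ∀ x, M.cycleOptVal γ σ x - M.val γ σ x = γ * (M.cycleOptVal γ σ (M.step σ x) -
      M.val γ σ (M.step σ x)) + -M.gain γ (M.cycleOptVal γ σ) (σ x) := fun x => by
    linarith [M.sub_eq_mul_add_gain (M.isValue_val hγ0 hγ1 σ) hσ (M.cycleOptVal γ σ) x]
  have hx : ∀ x, M.cycleOptVal γ σ x - M.val γ σ x ≤ M.hitTime σ x * c + c := fun x =>
    le_of_eq_mul_comp_add (D := fun z => M.cycleOptVal γ σ z - M.val γ σ z) hγ0 hγ1.le hrec hc hc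
      _ x (fun _ hi => htree _ (M.not_isRecurrent_of_lt_hitTime hi))
      (hcyc _ (M.isRecurrent_iterate_hitTime σ x))
  have hsum : (∑ x, (M.hitTime σ x : ℝ)) ≤ ((Fintype.card S - 1) ^ 2 : ℕ) := by
    exact_mod_cast M.sum_hitTime_le σ
  calc M.potential γ σ σ ≤ ∑ x, (M.hitTime σ x * c + c) := sum_le_sum fun x _ => hx x
    _ = (∑ x, (M.hitTime σ x : ℝ)) * c + Fintype.card S * c := by
        rw [sum_add_distrib, sum_mul, sum_const, card_univ, nsmul_eq_mul]
    _ ≤ _ := by nlinarith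

def HasFeature (π : S → A) : A ⊕ S → Prop :=
  Sum.elim (fun a => π (M.src a) = a) (M.IsRecurrent π)

theorem exists_feature_lost_of_potential_pos (hγ0 : 0 ≤ γ) (hγ1 : γ < 1) {σ : S → A}
    (hσ : M.IsPolicy σ) (hn : 2 ≤ Fintype.card S) (hpos : 0 < M.potential γ σ σ) :
    ∃ o, M.HasFeature σ o ∧ ∀ ρ ∈ M.cyclePolicies σ,
      M.potential γ σ ρ ≤ ((Fintype.card S : ℝ) ^ 2)⁻¹ * M.potential γ σ σ →
        ¬ M.HasFeature ρ o := by
  set c := ((Fintype.card S : ℝ) ^ 2)⁻¹ * M.potential γ σ σ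
  by_contra! hkept
  have htree : ∀ y, ¬ M.IsRecurrent σ y → -M.gain γ (M.cycleOptVal γ σ) (σ y) ≤ c := by
    intro y _
    obtain ⟨ρ, hρ, hρc, hρa⟩ := hkept (.inl (σ y)) (by simp [HasFeature, hσ y])
    calc -M.gain γ (M.cycleOptVal γ σ) (σ y)
        ≤ M.cycleOptVal γ σ (M.src (σ y)) - M.val γ ρ (M.src (σ y)) :=
          M.neg_gain_le_cycleOptVal_sub_val hγ0 hγ1 hρ hρa
      _ ≤ c := (M.sub_val_le_potential hρ _).trans hρc
  have hcyc : ∀ y, M.IsRecurrent σ y → M.cycleOptVal γ σ y - M.val γ σ y ≤ c := by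
    intro y hy
    obtain ⟨ρ, hρ, hρc, hρy⟩ := hkept (.inr y) hy
    rw [← M.val_eq_of_isRecurrent hγ0 hγ1 hσ hρ hρy]
    exact (M.sub_val_le_potential hρ y).trans hρc
  have hle := M.potential_self_le hγ0 hγ1 hσ (by positivity) htree hcyc
  have hn' : (2 : ℝ) ≤ Fintype.card S := by exact_mod_cast hn
  push_cast [Nat.cast_sub (by omega : 1 ≤ Fintype.card S)] at hle
  rw [← mul_assoc] at hle
  have hfrac : ((Fintype.card S - 1) ^ 2 + Fintype.card S) * ((Fintype.card S : ℝ) ^ 2)⁻¹ < 1 := by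
    rw [← div_eq_mul_inv, div_lt_one (by positivity)]
    linarith
  nlinarith

end Potential

section Run

variable {S A : Type} [Fintype S] [DecidableEq S] [DecidableEq A] (M : DetMDP S A)

structure PivotsWithoutNewCycle (γ : ℝ) (π : ℕ → S → A) (T : ℕ) : Prop where
  isPolicy : ∀ t, M.IsPolicy (π t)
  pivot : ∀ t < T, M.SimplexPivot γ (π t) (π (t + 1))
  isCycleOf_of_succ : ∀ t < T, ∀ C, M.IsCycleOf (π (t + 1)) C → M.IsCycleOf (π t) C

namespace PivotsWithoutNewCycle

variable {M} {γ : ℝ} {π : ℕ → S → A} {T : ℕ}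

theorem val_le (h : M.PivotsWithoutNewCycle γ π T) (hγ0 : 0 ≤ γ) (hγ1 : γ < 1) {t t' : ℕ}
    (htt' : t ≤ t') (ht' : t' ≤ T) (x : S) :
    M.val γ (π t) x ≤ M.val γ (π t') x := by
  induction t', htt' using Nat.le_induction with
  | base => exact le_rfl
  | succ t' _ ih =>
    exact (ih (by omega)).trans
      (M.val_le_of_simplexPivot hγ0 hγ1 (h.isPolicy t') (h.pivot t' (by omega)) x)

theorem mem_cyclePolicies [Fintype A] (h : M.PivotsWithoutNewCycle γ π T) {t t' : ℕ}
    (htt' : t ≤ t') (ht' : t' ≤ T) :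
    π t' ∈ M.cyclePolicies (π t) := by
  refine M.mem_cyclePolicies.2 ⟨h.isPolicy t', ?_⟩
  induction t', htt' using Nat.le_induction with
  | base => exact fun _ => id
  | succ t' _ ih => exact fun C hC => ih (by omega) C (h.isCycleOf_of_succ t' (by omega) C hC)

theorem potential_le [Fintype A] (h : M.PivotsWithoutNewCycle γ π T) (hγ0 : 0 ≤ γ)
    (hγ1 : γ < 1) (t k : ℕ) (hk : t + k ≤ T) :
    M.potential γ (π t) (π (t + k)) ≤
      (1 - ((Fintype.card S : ℝ) ^ 2)⁻¹) ^ k * M.potential γ (π t) (π t) := by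
  induction k with
  | zero => simp
  | succ k ih =>
    calc M.potential γ (π t) (π (t + k + 1))
        ≤ (1 - ((Fintype.card S : ℝ) ^ 2)⁻¹) * M.potential γ (π t) (π (t + k)) :=
          M.potential_le_of_simplexPivot hγ0 hγ1 (h.isPolicy t) (h.isPolicy (t + k))
            (h.pivot (t + k) (by omega)) (h.val_le hγ0 hγ1 (by omega) (by omega))
      _ ≤ (1 - ((Fintype.card S : ℝ) ^ 2)⁻¹) *
          ((1 - ((Fintype.card S : ℝ) ^ 2)⁻¹) ^ k * M.potential γ (π t) (π t)) :=
          mul_le_mul_of_nonneg_left (ih (by omega)) (one_sub_inv_sq_nonneg _)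
      _ = _ := by ring

theorem exists_feature_lost [Fintype A] (h : M.PivotsWithoutNewCycle γ π T) (hγ0 : 0 ≤ γ)
    (hγ1 : γ < 1) (hn : 2 ≤ Fintype.card S) {t : ℕ} (ht : t < T) :
    ∃ o, M.HasFeature (π t) o ∧
      ∀ t', t + phaseLength (Fintype.card S) ≤ t' → t' ≤ T → ¬ M.HasFeature (π t') o := by
  have hpos := M.potential_self_pos hγ0 hγ1 (h.isPolicy t) (h.pivot t ht)
    (h.mem_cyclePolicies (by omega) (by omega))
  obtain ⟨o, ho, hlost⟩ := M.exists_feature_lost_of_potential_pos hγ0 hγ1 (h.isPolicy t) hn hpos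
  refine ⟨o, ho, fun t' ht' hT => hlost _ (h.mem_cyclePolicies (by omega) hT) ?_⟩
  obtain ⟨k, rfl⟩ := Nat.exists_eq_add_of_le ht'
  have hfactor := one_sub_inv_sq_pow_phaseLength_le hn
  calc M.potential γ (π t) (π (t + phaseLength (Fintype.card S) + k))
      ≤ (1 - ((Fintype.card S : ℝ) ^ 2)⁻¹) ^ (phaseLength (Fintype.card S) + k) *
          M.potential γ (π t) (π t) := by
        rw [add_assoc]
        exact h.potential_le hγ0 hγ1 t _ (by omega)
    _ ≤ (1 - ((Fintype.card S : ℝ) ^ 2)⁻¹) ^ phaseLength (Fintype.card S) *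
          M.potential γ (π t) (π t) :=
        mul_le_mul_of_nonneg_right
          (pow_le_pow_of_le_one (one_sub_inv_sq_nonneg _) (by simp) (by omega))
          hpos.le
    _ ≤ ((Fintype.card S : ℝ) ^ 2)⁻¹ * M.potential γ (π t) (π t) :=
        mul_le_mul_of_nonneg_right hfactor hpos.le

theorem length_le [Fintype A] (h : M.PivotsWithoutNewCycle γ π T) (hγ0 : 0 ≤ γ) (hγ1 : γ < 1) :
    T ≤ (Fintype.card A + Fintype.card S) * phaseLength (Fintype.card S) := by
  rcases Nat.lt_or_ge (Fintype.card S) 2 with hn | hn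
  · rcases Nat.eq_zero_or_pos T with rfl | hT
    · exact Nat.zero_le _
    obtain ⟨C, hC, hC'⟩ :=
      M.exists_new_cycle_of_simplexPivot (by omega) (h.isPolicy 0) (h.pivot 0 hT)
    exact absurd (h.isCycleOf_of_succ 0 hT C hC) hC'
  set K := phaseLength (Fintype.card S)
  by_contra! hT
  have hjK : ∀ j : Fin (Fintype.card A + Fintype.card S + 1),
      j * K ≤ (Fintype.card A + Fintype.card S) * K :=
    fun j => Nat.mul_le_mul_right K (Nat.lt_succ_iff.1 j.isLt)
  choose f hf hlost using fun j : Fin (Fintype.card A + Fintype.card S + 1) =>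
    h.exists_feature_lost hγ0 hγ1 hn (t := j * K) ((hjK j).trans_lt hT)
  have hinj : Function.Injective f := by
    intro i j hij
    by_contra hne
    wlog hlt : i < j generalizing i j
    · exact this hij.symm (Ne.symm hne) (lt_of_le_of_ne (not_lt.1 hlt) (Ne.symm hne))
    have hiK : i * K + K ≤ j * K := by
      rw [← Nat.succ_mul]; exact Nat.mul_le_mul_right K hlt
    exact hlost i (j * K) hiK ((hjK j).trans hT.le) (hij ▸ hf j)
  simpa using Fintype.card_le_of_injective f hinj

end PivotsWithoutNewCycle

end Run

end DetMDP

/-- Starting from any policy of the execution, within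
`(m+n)·⌈log_{n²/(n²−1)} n²⌉` iterations either the execution terminates or some
iteration creates a new cycle. -/
theorem new_cycle_or_terminate
    {S A : Type} [Fintype S] [Fintype A] [DecidableEq S] [DecidableEq A]
    (M : DetMDP S A) (γ : ℝ) (hγ0 : 0 ≤ γ) (hγ1 : γ < 1)
    (seq : ℕ → S → A) (hexec : M.IsExecution γ seq) (t0 : ℕ) :
    ∃ t : ℕ, t0 ≤ t ∧
      t ≤ t0 + (Fintype.card A + Fintype.card S) *
        ⌈Real.log ((Fintype.card S : ℝ) ^ 2) /
          Real.log ((Fintype.card S : ℝ) ^ 2 / ((Fintype.card S : ℝ) ^ 2 - 1))⌉₊ ∧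
      (M.IsTerminal γ (seq t) ∨ M.NewCycleAt seq t) := by
  show ∃ t, t0 ≤ t ∧ t ≤ t0 + (Fintype.card A + Fintype.card S) *
    phaseLength (Fintype.card S) ∧ _
  set N := (Fintype.card A + Fintype.card S) * phaseLength (Fintype.card S)
  obtain ⟨hpol, hstep⟩ := hexec
  by_contra! hcon
  have hrun : M.PivotsWithoutNewCycle γ (fun t => seq (t0 + t)) (N + 1) :=
    { isPolicy := fun t => hpol (t0 + t)
      pivot := fun t ht => (hstep (t0 + t)).resolve_right fun hterm =>
        (hcon (t0 + t) (by omega) (by omega)).1 hterm.1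
      isCycleOf_of_succ := fun t ht C hC => by
        by_contra hC'
        exact (hcon (t0 + t) (by omega) (by omega)).2 ⟨C, hC, hC'⟩ }
  have := hrun.length_le hγ0 hγ1
  omega
end
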